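/- arXiv:1709.04161 — 13 statements merged into one kernel-verified Lean document; each statement's English description precedes it below -/
import Mathlib

section
/- Let m ≥ 1, let x : Fin m → ℕ satisfy x j ≥ 1 for all j, and let z : ℕ satisfy ∑ j, x j = 2·z. Consider the m+1 jobs indexed by Fin m ⊕ Unit with processing times p (inl j) = x j and p (inr) = 1. Then there exists a subset S ⊆ Fin m with ∑_{j ∈ S} x j = z if and only if there exists a schedule σ of these m+1 jobs such that ∑ j, x j · C (inl j) ≤ z + ∑ i, ∑_{j ≤ i} x i · x j and C (inr) ≤ z + 1. -/
/-!
Let `S` be the set of agent-1 jobs that `σ` runs before the unit job. The unit job completes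
at `x(S) + 1`, and an agent-1 job is delayed by the unit job exactly when it lies outside `S`,
so `∑ xᵢ Cᵢ = Q + x(Sᶜ)` with `Q = ∑_{σ j ≤ σ i} xᵢ xⱼ`. As `xᵢ xⱼ` is symmetric,
`2Q = (∑ xᵢ)² + ∑ xᵢ²` does not depend on the order, so `Q` is the double sum in the bound.
The two constraints therefore read `x(S) ≤ z` and `x(Sᶜ) ≤ z`, i.e. `x(S) = z`; conversely
every `S` arises by running `S`, then the unit job, then the remaining jobs.
-/

/-- The completion time of job `i` in the schedule `σ` (a bijection from jobs to
positions) with processing times `p`: the sum of processing times of all jobs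
scheduled at position at most the position of `i`. -/
def completionTime {ι : Type*} [Fintype ι] (p : ι → ℕ)
    (σ : ι ≃ Fin (Fintype.card ι)) (i : ι) : ℕ :=
  ∑ j ∈ Finset.univ.filter (fun j => σ j ≤ σ i), p j

open Finset

section SymmetricSum

variable {ι M α β : Type*} [Fintype ι] [AddCommMonoid M] [LinearOrder α] [LinearOrder β]

theorem two_nsmul_sum_filter_le_of_symm {F : ι → ι → M} (hF : ∀ i j, F i j = F j i)
    {f : ι → α} (hf : Function.Injective f) :
    2 • ∑ i, ∑ j with f j ≤ f i, F i j = ∑ i, ∑ j, F i j + ∑ i, F i i := by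
  classical
  have hpair : ∀ i j, (if f j ≤ f i then F i j else 0) + (if f i ≤ f j then F i j else 0)
      = F i j + if i = j then F i j else 0 := by
    intro i j
    rcases lt_trichotomy (f i) (f j) with h | h | h
    · simp [h.not_ge, h.le, hf.ne_iff.mp h.ne]
    · simp [hf h]
    · simp [h.not_ge, h.le, (hf.ne_iff.mp h.ne).symm]
  have hswap : ∑ i, ∑ j with f j ≤ f i, F i j = ∑ i, ∑ j, if f i ≤ f j then F i j else 0 := by
    simp only [sum_filter]
    rw [sum_comm]
    simp only [hF]
  calc 2 • ∑ i, ∑ j with f j ≤ f i, F i j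
      = ∑ i, ∑ j, ((if f j ≤ f i then F i j else 0) + if f i ≤ f j then F i j else 0) := by
        rw [two_nsmul]
        nth_rw 2 [hswap]
        simp only [sum_filter, ← sum_add_distrib]
    _ = ∑ i, ∑ j, F i j + ∑ i, F i i := by
        simp only [hpair, sum_add_distrib, sum_ite_eq, mem_univ, if_true]

theorem sum_filter_le_eq_of_symm [IsAddTorsionFree M] {F : ι → ι → M}
    (hF : ∀ i j, F i j = F j i) {f : ι → α} {g : ι → β} (hf : Function.Injective f)
    (hg : Function.Injective g) :
    ∑ i, ∑ j with f j ≤ f i, F i j = ∑ i, ∑ j with g j ≤ g i, F i j :=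
  IsAddTorsionFree.nsmul_right_injective two_ne_zero <| by
    simp only [two_nsmul_sum_filter_le_of_symm hF hf, two_nsmul_sum_filter_le_of_symm hF hg]

end SymmetricSum

theorem Fintype.exists_equivFin_lt_iff {β α : Type*} [Fintype β] [LinearOrder α] {g : β → α}
    (hg : Function.Injective g) :
    ∃ σ : β ≃ Fin (Fintype.card β), ∀ a b, σ a < σ b ↔ g a < g b := by
  let := LinearOrder.lift' g hg
  let e := (Fintype.orderIsoFinOfCardEq β rfl).symm
  exact ⟨e.toEquiv, fun _ _ => e.lt_iff_lt⟩

section OneUnitJob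

variable {ι : Type*} [Fintype ι] (x : ι → ℕ) (σ : ι ⊕ Unit ≃ Fin (Fintype.card (ι ⊕ Unit)))

def jobsBefore : Finset ι := {i | σ (.inl i) < σ (.inr ())}

theorem completionTime_sumElim (t : ι ⊕ Unit) :
    completionTime (Sum.elim x fun _ => 1) σ t
      = ∑ j with σ (.inl j) ≤ σ t, x j + if σ (.inr ()) ≤ σ t then 1 else 0 := by
  simp only [completionTime, sum_filter, Fintype.sum_sum_type, Sum.elim_inl, Sum.elim_inr,
    Fintype.sum_unique]

theorem completionTime_inr :
    completionTime (Sum.elim x fun _ => 1) σ (.inr ()) = ∑ i ∈ jobsBefore σ, x i + 1 := by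
  have hle : ∀ j, σ (.inl j) ≤ σ (.inr ()) ↔ σ (.inl j) < σ (.inr ()) := fun j =>
    (σ.injective.ne Sum.inl_ne_inr).le_iff_lt
  simp only [completionTime_sumElim, hle, le_refl, if_true, jobsBefore]

theorem sum_mul_completionTime_inl [DecidableEq ι] :
    ∑ i, x i * completionTime (Sum.elim x fun _ => 1) σ (.inl i)
      = ∑ i, ∑ j with σ (.inl j) ≤ σ (.inl i), x i * x j + ∑ i ∈ (jobsBefore σ)ᶜ, x i := by
  have hle : ∀ i, σ (.inr ()) ≤ σ (.inl i) ↔ i ∈ (jobsBefore σ)ᶜ := fun i => by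
    simp [jobsBefore]
  simp only [completionTime_sumElim, hle, mul_add, mul_sum, mul_ite, mul_one, mul_zero,
    sum_add_distrib, sum_ite_mem, univ_inter]

theorem exists_jobsBefore_eq (S : Finset ι) :
    ∃ σ : ι ⊕ Unit ≃ Fin (Fintype.card (ι ⊕ Unit)), jobsBefore σ = S := by
  classical
  let e := Fintype.equivFin ι
  -- sort by the key: first `S`, then the unit job, then the rest
  let g : ι ⊕ Unit → ℕ ×ₗ ℕ :=
    Sum.elim (fun i => toLex (if i ∈ S then 0 else 2, (e i : ℕ))) fun _ => toLex (1, 0)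
  have hg : Function.Injective g := by
    rintro (i | _) (j | _) h <;>
      simp only [g, Sum.elim_inl, Sum.elim_inr, toLex_inj, Prod.mk.injEq] at h
    · simpa using e.injective (Fin.ext h.2)
    all_goals first | rfl | (split_ifs at h <;> simp at h)
  obtain ⟨σ, hσ⟩ := Fintype.exists_equivFin_lt_iff hg
  refine ⟨σ, ext fun i => ?_⟩
  by_cases hi : i ∈ S <;> simp [jobsBefore, hσ, g, hi, Prod.Lex.toLex_lt_toLex]

end OneUnitJob

theorem sum_eq_half_iff_le_and_compl_le {ι : Type*} [Fintype ι] [DecidableEq ι] {x : ι → ℕ}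
    {z : ℕ} (hsum : ∑ j, x j = 2 * z) (S : Finset ι) :
    ∑ i ∈ S, x i = z ↔ ∑ i ∈ S, x i ≤ z ∧ ∑ i ∈ Sᶜ, x i ≤ z := by
  have := sum_add_sum_compl S x
  omega

theorem schedule_feasible_iff {ι : Type*} [Fintype ι] [DecidableEq ι] [LinearOrder ι]
    [LocallyFiniteOrderBot ι] {x : ι → ℕ} {z : ℕ} (hsum : ∑ j, x j = 2 * z)
    (σ : ι ⊕ Unit ≃ Fin (Fintype.card (ι ⊕ Unit))) :
    ((∑ i, x i * completionTime (Sum.elim x fun _ => 1) σ (.inl i)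
        ≤ z + ∑ i, ∑ j ∈ Iic i, x i * x j) ∧
      completionTime (Sum.elim x fun _ => 1) σ (.inr ()) ≤ z + 1) ↔
    ∑ i ∈ jobsBefore σ, x i = z := by
  have hquad : ∑ i, ∑ j with σ (.inl j) ≤ σ (.inl i), x i * x j
      = ∑ i, ∑ j ∈ Iic i, x i * x j := by
    simpa [filter_ge_eq_Iic] using sum_filter_le_eq_of_symm (fun i j => mul_comm (x i) (x j))
      (σ.injective.comp Sum.inl_injective) Function.injective_id
  rw [sum_mul_completionTime_inl, hquad, completionTime_inr,
    sum_eq_half_iff_le_and_compl_le hsum]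
  omega

theorem partition_reduction_sum_completion_general
    (m : ℕ) (x : Fin m → ℕ)
    (z : ℕ) (hsum : ∑ j, x j = 2 * z) :
    (∃ S : Finset (Fin m), ∑ j ∈ S, x j = z) ↔
    (∃ σ : (Fin m ⊕ Unit) ≃ Fin (Fintype.card (Fin m ⊕ Unit)),
      (∑ i, x i * completionTime (Sum.elim x fun _ => 1) σ (Sum.inl i)
          ≤ z + ∑ i, ∑ j ∈ Finset.Iic i, x i * x j) ∧
      completionTime (Sum.elim x fun _ => 1) σ (Sum.inr ()) ≤ z + 1) := by
  simp only [schedule_feasible_iff hsum]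
  constructor
  · rintro ⟨S, hS⟩
    obtain ⟨σ, rfl⟩ := exists_jobsBefore_eq S
    exact ⟨σ, hS⟩
  · rintro ⟨σ, hσ⟩
    exact ⟨jobsBefore σ, hσ⟩

/-- Correctness of the Partition reduction for
`1 | ∑ w_j C_j^{(1)} ≤ A₁, ∑ C_j^{(2)} ≤ A₂ |` with a single agent-2 job. -/
theorem partition_reduction_sum_completion
    (m : ℕ) (hm : 1 ≤ m) (x : Fin m → ℕ) (hx : ∀ j, 1 ≤ x j)
    (z : ℕ) (hsum : ∑ j, x j = 2 * z) :
    (∃ S : Finset (Fin m), ∑ j ∈ S, x j = z) ↔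
    (∃ σ : (Fin m ⊕ Unit) ≃ Fin (Fintype.card (Fin m ⊕ Unit)),
      (∑ i, x i * completionTime (Sum.elim x fun _ => 1) σ (Sum.inl i)
          ≤ z + ∑ i, ∑ j ∈ Finset.Iic i, x i * x j) ∧
      completionTime (Sum.elim x fun _ => 1) σ (Sum.inr ()) ≤ z + 1) :=
  partition_reduction_sum_completion_general m x z hsum
end

section
/- Let p : Fin n ⊕ Fin k → ℕ be processing times, w₂ : Fin k → ℕ weights for the agent-2 jobs, and A₁, A₂ : ℕ. If there exists a schedule σ of the jobs Fin n ⊕ Fin k with ∑ i, C (inl i) ≤ A₁ and ∑ j, w₂ j · C (inr j) ≤ A₂, then there exists such a schedule σ' (satisfying both bounds) in which the agent-1 jobs are processed in nondecreasing order of processing time, i.e., for all agent-1 jobs i, i', if σ' (inl i) < σ' (inl i') then p (inl i) ≤ p (inl i'). -/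
namespace Finset

variable {ι M : Type*} [DecidableEq ι] [AddCommMonoid M] (f : ι → M) {a b : ι} {T : Finset ι}

theorem sum_comp_swap_of_mem_iff (h : a ∈ T ↔ b ∈ T) :
    ∑ j ∈ T, f (Equiv.swap a b j) = ∑ j ∈ T, f j := by
  refine sum_equiv (Equiv.swap a b) (fun j => ?_) (fun _ _ => rfl)
  rcases eq_or_ne j a with rfl | hja
  · simpa using h
  rcases eq_or_ne j b with rfl | hjb
  · simpa using h.symm
  · rw [Equiv.swap_apply_of_ne_of_ne hja hjb]

theorem sum_comp_swap_add (ha : a ∈ T) (hb : b ∉ T) :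
    ∑ j ∈ T, f (Equiv.swap a b j) + f a = ∑ j ∈ T, f j + f b := by
  have hT : ∀ j ∈ T.erase a, f (Equiv.swap a b j) = f j := fun j hj =>
    congrArg f <| Equiv.swap_apply_of_ne_of_ne (ne_of_mem_erase hj)
      (fun hjb => hb (hjb ▸ mem_of_mem_erase hj))
  rw [← sum_erase_add T _ ha, ← sum_erase_add T f ha, sum_congr rfl hT,
    Equiv.swap_apply_left, add_right_comm]

end Finset

section Exchange

open Finset

variable {ι : Type*} [Fintype ι] (p : ι → ℕ) (σ : ι ≃ Fin (Fintype.card ι))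

theorem completionTime_trans (τ : Equiv.Perm ι) (x : ι) :
    completionTime p (τ.trans σ) x = completionTime (p ∘ τ.symm) σ (τ x) :=
  sum_equiv τ (fun _ => by rw [mem_filter, mem_filter]; simp) (by simp)

variable [DecidableEq ι] {a b : ι}

theorem completionTime_comp_swap_add_self (hab : σ a < σ b) :
    completionTime (p ∘ Equiv.swap a b) σ a + p a = completionTime p σ a + p b :=
  sum_comp_swap_add p (by simp) (by simpa using hab)

/-- Only the prefixes containing `a` but not `b` change, and in them `p a` becomes `p b`. -/
theorem completionTime_comp_swap_le (hab : σ a < σ b) (hp : p b ≤ p a) (y : ι) :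
    completionTime (p ∘ Equiv.swap a b) σ y ≤ completionTime p σ y := by
  by_cases hay : σ a ≤ σ y
  · by_cases hby : σ b ≤ σ y
    · exact (sum_comp_swap_of_mem_iff p (by simp [hay, hby])).le
    · have key := sum_comp_swap_add p (T := univ.filter fun j => σ j ≤ σ y)
        (by simpa using hay) (by simpa using hby)
      unfold completionTime
      simp only [Function.comp_apply]
      omega
  · have hby : ¬σ b ≤ σ y := not_le.mpr ((not_le.mp hay).trans hab)
    exact (sum_comp_swap_of_mem_iff p (by simp [hay, hby])).le

theorem completionTime_swap_trans_le (hab : σ a < σ b) (hp : p b ≤ p a) {x : ι}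
    (hxa : x ≠ a) (hxb : x ≠ b) :
    completionTime p ((Equiv.swap a b).trans σ) x ≤ completionTime p σ x := by
  rw [completionTime_trans, Equiv.symm_swap, Equiv.swap_apply_of_ne_of_ne hxa hxb]
  exact completionTime_comp_swap_le p σ hab hp x

theorem sum_completionTime_swap_trans_lt {S : Finset ι} (ha : a ∈ S) (hb : b ∈ S)
    (hab : σ a < σ b) (hp : p b < p a) :
    ∑ x ∈ S, completionTime p ((Equiv.swap a b).trans σ) x
      < ∑ x ∈ S, completionTime p σ x := by
  simp only [completionTime_trans, Equiv.symm_swap]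
  rw [sum_comp_swap_of_mem_iff _ (iff_of_true ha hb)]
  refine sum_lt_sum (fun y _ => completionTime_comp_swap_le p σ hab hp.le y) ⟨a, ha, ?_⟩
  have := completionTime_comp_swap_add_self p σ hab
  omega

end Exchange

/-- SPT-rule exchange lemma for `1 | ∑ C_j^{(1)} ≤ A₁, ∑ w_j^{(2)} C_j^{(2)} ≤ A₂ |`:
if a feasible schedule exists, then one exists in which the agent-1 jobs are
processed in nondecreasing order of processing time. -/
theorem spt_exchange
    (n k : ℕ) (p : Fin n ⊕ Fin k → ℕ) (w₂ : Fin k → ℕ) (A₁ A₂ : ℕ)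
    (h : ∃ σ : (Fin n ⊕ Fin k) ≃ Fin (Fintype.card (Fin n ⊕ Fin k)),
      (∑ i, completionTime p σ (Sum.inl i) ≤ A₁) ∧
      (∑ j, w₂ j * completionTime p σ (Sum.inr j) ≤ A₂)) :
    ∃ σ' : (Fin n ⊕ Fin k) ≃ Fin (Fintype.card (Fin n ⊕ Fin k)),
      (∑ i, completionTime p σ' (Sum.inl i) ≤ A₁) ∧
      (∑ j, w₂ j * completionTime p σ' (Sum.inr j) ≤ A₂) ∧
      (∀ i i' : Fin n, σ' (Sum.inl i) < σ' (Sum.inl i') →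
        p (Sum.inl i) ≤ p (Sum.inl i')) := by
  obtain ⟨σ, ⟨hσ₁, hσ₂⟩, hmin⟩ :=
    Set.Finite.exists_minimalFor (fun σ => ∑ i, completionTime p σ (Sum.inl i))
      {σ | (∑ i, completionTime p σ (Sum.inl i) ≤ A₁) ∧
        (∑ j, w₂ j * completionTime p σ (Sum.inr j) ≤ A₂)} (Set.toFinite _) h
  refine ⟨σ, hσ₁, hσ₂, fun i i' hlt => ?_⟩
  by_contra! hp
  set σ' := (Equiv.swap (Sum.inl i) (Sum.inl i')).trans σ
  have h₁ : ∑ m, completionTime p σ' (Sum.inl m) < ∑ m, completionTime p σ (Sum.inl m) := by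
    simpa only [Finset.sum_map, Function.Embedding.inl_apply] using sum_completionTime_swap_trans_lt p σ
      (S := Finset.univ.map .inl) (by simp) (by simp) hlt hp
  have h₂ : ∑ j, w₂ j * completionTime p σ' (Sum.inr j)
      ≤ ∑ j, w₂ j * completionTime p σ (Sum.inr j) :=
    Finset.sum_le_sum fun j _ => Nat.mul_le_mul_left _ <|
      completionTime_swap_trans_le p σ hlt hp.le Sum.inr_ne_inl Sum.inr_ne_inl
  exact h₁.not_ge (hmin ⟨h₁.le.trans hσ₁, h₂.trans hσ₂⟩ h₁.le)
end

section
/- Let p₁ : Fin n → ℕ and p₂ : Fin k → ℕ be processing times and let x : Fin k → ℕ satisfy x j ≤ n for all j. In any schedule σ of the jobs Fin n ⊕ Fin k in which the agent-1 jobs appear in index order, the agent-2 jobs appear in index order, and for each j exactly x j agent-1 jobs are scheduled before agent-2 job j, the total completion time of the agent-1 jobs satisfies ∑ i, C (inl i) = ∑_{j=1}^{n} (n − j + 1) · p₁ j + ∑_{j=1}^{k} (n − x j) · p₂ j. -/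
open Finset

theorem sum_completionTime_comp {ι κ : Type*} [Fintype ι] [Fintype κ] (p : ι → ℕ)
    (σ : ι ≃ Fin (Fintype.card ι)) (f : κ → ι) :
    ∑ i, completionTime p σ (f i) = ∑ j, #{i | σ j ≤ σ (f i)} * p j := by
  simp only [completionTime, sum_filter]
  rw [sum_comm]
  refine sum_congr rfl fun j _ => ?_
  rw [← sum_filter, sum_const, smul_eq_mul]

theorem StrictMono.card_filter_apply_le {α : Type*} [LinearOrder α] {n : ℕ} {f : Fin n → α}
    (hf : StrictMono f) (j : Fin n) : #{i | f j ≤ f i} = n - j := by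
  rw [← Fin.card_Ici j]
  congr 1
  ext i
  simp [hf.le_iff_le]

theorem card_filter_le_eq_card_sub_card_filter_lt {κ α : Type*} [Fintype κ] [LinearOrder α]
    (f : κ → α) (a : α) : #{i | a ≤ f i} = Fintype.card κ - #{i | f i < a} := by
  have h := card_filter_add_card_filter_not (s := univ) (fun i => f i < a)
  simp only [not_lt, card_univ] at h
  omega

/-- Indices of `Fin n` are 0-based, so the paper's coefficient `n - j + 1` of `p₁ j` reads
`n - j` here. -/
theorem agent1_total_completion_formula_general
    (n k : ℕ) (p₁ : Fin n → ℕ) (p₂ : Fin k → ℕ) (x : Fin k → ℕ)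
    (σ : (Fin n ⊕ Fin k) ≃ Fin (Fintype.card (Fin n ⊕ Fin k)))
    (h1 : ∀ i i' : Fin n, i < i' → σ (Sum.inl i) < σ (Sum.inl i'))
    (h3 : ∀ j : Fin k,
      (Finset.univ.filter (fun i : Fin n => σ (Sum.inl i) < σ (Sum.inr j))).card
        = x j) :
    ∑ i, completionTime (Sum.elim p₁ p₂) σ (Sum.inl i)
      = (∑ j : Fin n, (n - (j : ℕ)) * p₁ j) + ∑ j : Fin k, (n - x j) * p₂ j := by
  have hmono : StrictMono fun i : Fin n => σ (Sum.inl i) := h1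
  rw [sum_completionTime_comp, Fintype.sum_sum_type]
  congr 1
  · exact sum_congr rfl fun j _ => by rw [hmono.card_filter_apply_le j, Sum.elim_inl]
  · refine sum_congr rfl fun j _ => ?_
    rw [card_filter_le_eq_card_sub_card_filter_lt, h3 j, Fintype.card_fin, Sum.elim_inr]

/-- Lemma 3: in any schedule where the agent-1 jobs (processing times `p₁`) appear
in index order, the agent-2 jobs (processing times `p₂`) appear in index order,
and exactly `x j` agent-1 jobs precede agent-2 job `j`, the total completion
time of the agent-1 jobs equals
`∑_j (n - j + 1)·p₁ j + ∑_j (n - x j)·p₂ j` (indices of `Fin n` are 0-based, so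
the coefficient of `p₁ j` is `n - j`). -/
theorem agent1_total_completion_formula
    (n k : ℕ) (p₁ : Fin n → ℕ) (p₂ : Fin k → ℕ) (x : Fin k → ℕ)
    (hx : ∀ j, x j ≤ n)
    (σ : (Fin n ⊕ Fin k) ≃ Fin (Fintype.card (Fin n ⊕ Fin k)))
    (h1 : ∀ i i' : Fin n, i < i' → σ (Sum.inl i) < σ (Sum.inl i'))
    (h2 : ∀ j j' : Fin k, j < j' → σ (Sum.inr j) < σ (Sum.inr j'))
    (h3 : ∀ j : Fin k,
      (Finset.univ.filter (fun i : Fin n => σ (Sum.inl i) < σ (Sum.inr j))).card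
        = x j) :
    ∑ i, completionTime (Sum.elim p₁ p₂) σ (Sum.inl i)
      = (∑ j : Fin n, (n - (j : ℕ)) * p₁ j) + ∑ j : Fin k, (n - x j) * p₂ j :=
  agent1_total_completion_formula_general n k p₁ p₂ x σ h1 h3
end

section
/- Let n, x : ℕ with x ≤ n, let p : ℕ → ℝ satisfy p 0 = 0 and p (i−1) ≤ p i for all 1 ≤ i ≤ n, and let y : ℕ → ℝ satisfy, for every i with 1 ≤ i ≤ n, both y i ≥ 0 and y i ≥ ((x : ℝ) − i + 1) · (p i − p (i−1)). Then ∑_{i=1}^{n} y i ≥ ∑_{i=1}^{x} p i. -/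
open Finset

theorem sum_Icc_one_sub_pred {G : Type*} [AddCommGroup G] (p : ℕ → G) (m : ℕ) :
    ∑ i ∈ Icc 1 m, (p i - p (i - 1)) = p m - p 0 := by
  induction m with
  | zero => simp
  | succ k ih => rw [sum_Icc_succ_top (by omega), ih, Nat.add_sub_cancel, sub_add_sub_cancel']

/-- Abel summation: the step `p i - p (i - 1)` occurs in each of the `m - i + 1` partial sums
`p j - p 0` with `i ≤ j ≤ m`. -/
theorem sum_Icc_mul_sub_eq_sum_sub {R : Type*} [CommRing R] (p : ℕ → R) (m : ℕ) :
    ∑ i ∈ Icc 1 m, ((m : R) - i + 1) * (p i - p (i - 1)) = ∑ i ∈ Icc 1 m, p i - m * p 0 := by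
  induction m with
  | zero => simp
  | succ k ih =>
    have hsplit : ∑ i ∈ Icc 1 (k + 1), (((k + 1 : ℕ) : R) - i + 1) * (p i - p (i - 1))
        = ∑ i ∈ Icc 1 (k + 1), ((k : R) - i + 1) * (p i - p (i - 1))
          + ∑ i ∈ Icc 1 (k + 1), (p i - p (i - 1)) := by
      rw [← sum_add_distrib]
      refine sum_congr rfl fun i _ ↦ ?_
      push_cast
      ring
    rw [hsplit, sum_Icc_one_sub_pred, sum_Icc_succ_top (by omega), ih,
      sum_Icc_succ_top (by omega)]
    push_cast
    ring

theorem milp_steps_lower_bound_general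
    (n x : ℕ) (hx : x ≤ n) (p : ℕ → ℝ) (hp0 : p 0 = 0)
    (y : ℕ → ℝ)
    (hy0 : ∀ i, 1 ≤ i → i ≤ n → 0 ≤ y i)
    (hy : ∀ i, 1 ≤ i → i ≤ n → ((x : ℝ) - i + 1) * (p i - p (i - 1)) ≤ y i) :
    ∑ i ∈ Finset.Icc 1 x, p i ≤ ∑ i ∈ Finset.Icc 1 n, y i := by
  calc ∑ i ∈ Icc 1 x, p i
      = ∑ i ∈ Icc 1 x, ((x : ℝ) - i + 1) * (p i - p (i - 1)) := by
        rw [sum_Icc_mul_sub_eq_sum_sub, hp0, mul_zero, sub_zero]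
    _ ≤ ∑ i ∈ Icc 1 x, y i := sum_le_sum fun i hi ↦ by
        obtain ⟨hi1, hix⟩ := mem_Icc.mp hi
        exact hy i hi1 (hix.trans hx)
    _ ≤ ∑ i ∈ Icc 1 n, y i := sum_le_sum_of_subset_of_nonneg (Icc_subset_Icc_right hx)
        fun i hi _ ↦ hy0 i (mem_Icc.mp hi).1 (mem_Icc.mp hi).2

/-- Core of Lemma 4: if `p 0 = 0`, `p 1 ≤ ⋯ ≤ p n`, `x ≤ n`, and for every
`1 ≤ i ≤ n` we have `y i ≥ 0` and `y i ≥ (x - i + 1)·(p i - p (i-1))`, then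
`∑_{i=1}^{n} y i ≥ ∑_{i=1}^{x} p i`. -/
theorem milp_steps_lower_bound
    (n x : ℕ) (hx : x ≤ n) (p : ℕ → ℝ) (hp0 : p 0 = 0)
    (hmono : ∀ i, 1 ≤ i → i ≤ n → p (i - 1) ≤ p i)
    (y : ℕ → ℝ)
    (hy0 : ∀ i, 1 ≤ i → i ≤ n → 0 ≤ y i)
    (hy : ∀ i, 1 ≤ i → i ≤ n → ((x : ℝ) - i + 1) * (p i - p (i - 1)) ≤ y i) :
    ∑ i ∈ Finset.Icc 1 x, p i ≤ ∑ i ∈ Finset.Icc 1 n, y i :=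
  milp_steps_lower_bound_general n x hx p hp0 y hy0 hy
end

section
/- Let p : Fin n ⊕ Fin k → ℕ be processing times with p (inl i) = 1 for every agent-1 job i, let w₁ : Fin n → ℕ and w₂ : Fin k → ℕ be weights, and let A₁, A₂ : ℕ. If there exists a schedule σ with ∑ i, w₁ i · C (inl i) ≤ A₁ and ∑ j, w₂ j · C (inr j) ≤ A₂, then there exists such a schedule σ' (satisfying both bounds) in which the agent-1 jobs are processed in nonincreasing weight order, i.e., for all agent-1 jobs i, i', if σ' (inl i) < σ' (inl i') then w₁ i ≥ w₁ i'. -/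
/-!
Relabel the agent-1 jobs among the positions they already occupy, so that heavier jobs take
earlier positions. As every agent-1 job has unit length, this leaves the processing time in every
position unchanged: agent-2 completion times stay the same and agent-1 completion times are merely
permuted. By the rearrangement inequality, pairing the larger weights with the smaller completion
times can only decrease the weighted sum of agent 1.
-/

open Finset

section Schedule

variable {ι : Type*} [Fintype ι] (p : ι → ℕ) (σ : ι ≃ Fin (Fintype.card ι))

theorem completionTime_le_of_le {i j : ι} (hij : σ i ≤ σ j) :
    completionTime p σ i ≤ completionTime p σ j :=
  sum_le_sum_of_subset fun _ hm => by
    simp only [mem_filter, mem_univ, true_and] at hm ⊢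
    exact hm.trans hij

theorem completionTime_trans_s6 {e : Equiv.Perm ι} (he : ∀ m, p (e m) = p m) (i : ι) :
    completionTime p (e.trans σ) i = completionTime p σ (e i) :=
  sum_equiv e (fun _ => by simp only [mem_filter, mem_univ, true_and]; rfl) fun m _ => (he m).symm

end Schedule

theorem exists_perm_antivary {α β : Type*} [LinearOrder α] [LinearOrder β] {n : ℕ}
    (w : Fin n → β) (g : Fin n → α) : ∃ π : Equiv.Perm (Fin n), Antivary (w ∘ π) g := by
  -- list the indices in increasing order of `g`, and send the `r`-th of them to the index
  -- with the `r`-th largest weight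
  let s₁ := Tuple.sort g
  let s₂ := Tuple.sort w
  refine ⟨s₂ * Fin.revPerm * s₁⁻¹, fun a b hab => ?_⟩
  have hrank : s₁⁻¹ a < s₁⁻¹ b := by
    by_contra! hba
    have := Tuple.monotone_sort g hba
    simp only [Function.comp_apply, Equiv.Perm.inv_def, Equiv.apply_symm_apply, s₁] at this
    exact this.not_gt hab
  exact Tuple.monotone_sort w (Fin.rev_le_rev.2 hrank.le)

theorem sum_mul_comp_symm_le_of_antivary {ι R : Type*} [Fintype ι] [Semiring R] [LinearOrder R]
    [IsStrictOrderedRing R] [ExistsAddOfLE R] {w c : ι → R}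
    {π : Equiv.Perm ι} (h : Antivary (w ∘ π) c) :
    ∑ i, w i * c (π.symm i) ≤ ∑ i, w i * c i :=
  calc ∑ i, w i * c (π.symm i)
      = ∑ i, w (π i) * c i := by simpa using (Equiv.sum_comp π fun i => w i * c (π.symm i)).symm
    _ ≤ ∑ i, w (π i) * c (π i) := h.sum_mul_le_sum_mul_comp_perm
    _ = ∑ i, w i * c i := Equiv.sum_comp π fun i => w i * c i

/-- Weight-order exchange lemma (Lemma 5) for
`1 | p_j^{(1)} = 1, ∑ w_j^{(1)} C_j^{(1)} ≤ A₁, ∑ w_j^{(2)} C_j^{(2)} ≤ A₂ |`: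
if all agent-1 jobs have unit processing time and a feasible schedule exists,
then one exists in which the agent-1 jobs are processed in nonincreasing
weight order. -/
theorem weight_order_exchange
    (n k : ℕ) (p : Fin n ⊕ Fin k → ℕ) (hp : ∀ i : Fin n, p (Sum.inl i) = 1)
    (w₁ : Fin n → ℕ) (w₂ : Fin k → ℕ) (A₁ A₂ : ℕ)
    (h : ∃ σ : (Fin n ⊕ Fin k) ≃ Fin (Fintype.card (Fin n ⊕ Fin k)),
      (∑ i, w₁ i * completionTime p σ (Sum.inl i) ≤ A₁) ∧
      (∑ j, w₂ j * completionTime p σ (Sum.inr j) ≤ A₂)) :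
    ∃ σ' : (Fin n ⊕ Fin k) ≃ Fin (Fintype.card (Fin n ⊕ Fin k)),
      (∑ i, w₁ i * completionTime p σ' (Sum.inl i) ≤ A₁) ∧
      (∑ j, w₂ j * completionTime p σ' (Sum.inr j) ≤ A₂) ∧
      (∀ i i' : Fin n, σ' (Sum.inl i) < σ' (Sum.inl i') → w₁ i' ≤ w₁ i) := by
  obtain ⟨σ, h₁, h₂⟩ := h
  obtain ⟨π, hπ⟩ := exists_perm_antivary w₁ fun i => σ (Sum.inl i)
  let e : Equiv.Perm (Fin n ⊕ Fin k) := Equiv.sumCongr π.symm (Equiv.refl _)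
  have hC := completionTime_trans_s6 p σ (e := e) (by rintro (i | j) <;> simp [e, hp])
  let c : Fin n → ℕ := fun i => completionTime p σ (Sum.inl i)
  have hc : Antivary (w₁ ∘ π) c := fun a b hab =>
    hπ (lt_of_not_ge fun hba => hab.not_ge (completionTime_le_of_le p σ hba))
  refine ⟨e.trans σ, ?_, ?_, fun i i' hii' => ?_⟩
  · simpa [hC, e, c] using (sum_mul_comp_symm_le_of_antivary hc).trans h₁
  · simpa [hC, e] using h₂
  · simpa using hπ (i := π.symm i) (j := π.symm i') hii'
end

section
/- Let n, x : ℕ with x ≤ n, let w : ℕ → ℝ satisfy w (n+1) = 0 and w i ≥ w (i+1) for all 1 ≤ i ≤ n, and let y : ℕ → ℝ satisfy, for every i with 1 ≤ i ≤ n, both y i ≥ 0 and y i ≥ ((x : ℝ) − n + i) · (w i − w (i+1)). Then ∑_{i=1}^{n} y i ≥ ∑_{i=n−x+1}^{n} w i. -/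
/-! With `k = n - x` the coefficient of the `i`-th step is `i - k`. Summation by parts over
`k < i ≤ n`, using `w (n + 1) = 0`, turns these weighted steps into `∑_{k < i ≤ n} w i`, which is
therefore bounded by `∑_{k < i ≤ n} y i`; the remaining `y i` are nonnegative. -/

theorem sum_Icc_mul_sub_succ {R : Type*} [CommRing R] (w : ℕ → R) {k m : ℕ} (hkm : k ≤ m) :
    ∑ i ∈ Finset.Icc (k + 1) m, ((i : R) - k) * (w i - w (i + 1)) =
      ∑ i ∈ Finset.Icc (k + 1) m, w i - ((m : R) - k) * w (m + 1) := by
  induction m, hkm using Nat.le_induction with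
  | base => simp
  | succ m hkm ih =>
    rw [Finset.sum_Icc_succ_top (by omega), Finset.sum_Icc_succ_top (by omega), ih]
    push_cast
    ring

theorem milp_weight_steps_lower_bound_general
    (n x : ℕ) (hx : x ≤ n) (w : ℕ → ℝ) (hw0 : w (n + 1) = 0)
    (y : ℕ → ℝ)
    (hy0 : ∀ i, 1 ≤ i → i ≤ n → 0 ≤ y i)
    (hy : ∀ i, 1 ≤ i → i ≤ n → ((x : ℝ) - n + i) * (w i - w (i + 1)) ≤ y i) :
    ∑ i ∈ Finset.Icc (n - x + 1) n, w i ≤ ∑ i ∈ Finset.Icc 1 n, y i := by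
  have hcoeff (i : ℕ) : (x : ℝ) - n + i = i - (n - x : ℕ) := by
    rw [Nat.cast_sub hx]; ring
  calc ∑ i ∈ Finset.Icc (n - x + 1) n, w i
      = ∑ i ∈ Finset.Icc (n - x + 1) n, ((i : ℝ) - (n - x : ℕ)) * (w i - w (i + 1)) := by
        rw [sum_Icc_mul_sub_succ w (Nat.sub_le n x), hw0, mul_zero, sub_zero]
    _ ≤ ∑ i ∈ Finset.Icc (n - x + 1) n, y i := by
        refine Finset.sum_le_sum fun i hi => ?_
        rw [Finset.mem_Icc] at hi
        simpa only [hcoeff] using hy i (by omega) hi.2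
    _ ≤ ∑ i ∈ Finset.Icc 1 n, y i := by
        refine Finset.sum_le_sum_of_subset_of_nonneg (Finset.Icc_subset_Icc_left (by omega)) ?_
        intro i hi _
        rw [Finset.mem_Icc] at hi
        exact hy0 i hi.1 hi.2

/-- Correctness of constraints (9)–(10): if `w (n+1) = 0`, `w 1 ≥ ⋯ ≥ w n`,
`x ≤ n`, and for every `1 ≤ i ≤ n` we have `y i ≥ 0` and
`y i ≥ (x - n + i)·(w i - w (i+1))`, then
`∑_{i=1}^{n} y i ≥ ∑_{i=n-x+1}^{n} w i`. -/
theorem milp_weight_steps_lower_bound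
    (n x : ℕ) (hx : x ≤ n) (w : ℕ → ℝ) (hw0 : w (n + 1) = 0)
    (hmono : ∀ i, 1 ≤ i → i ≤ n → w (i + 1) ≤ w i)
    (y : ℕ → ℝ)
    (hy0 : ∀ i, 1 ≤ i → i ≤ n → 0 ≤ y i)
    (hy : ∀ i, 1 ≤ i → i ≤ n → ((x : ℝ) - n + i) * (w i - w (i + 1)) ≤ y i) :
    ∑ i ∈ Finset.Icc (n - x + 1) n, w i ≤ ∑ i ∈ Finset.Icc 1 n, y i :=
  milp_weight_steps_lower_bound_general n x hx w hw0 y hy0 hy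
end

section
/- Let p₁ : Fin n → ℕ be agent-1 processing times, and let the agent-2 jobs have processing times p₂ : Fin k → ℕ, due dates d₂ : Fin k → ℕ, and weights w₂ : Fin k → ℕ; let A₁, A₂ : ℕ. If there exists a schedule σ with ∑ i, C (inl i) ≤ A₁ and ∑ over tardy agent-2 jobs j of w₂ j ≤ A₂, then there exists a schedule σ' satisfying both bounds in which additionally: (i) for all agent-1 jobs i, i', if σ' (inl i) < σ' (inl i') then p₁ i ≤ p₁ i'; (ii) for all early agent-2 jobs j, j', if σ' (inr j) < σ' (inr j') then d₂ j ≤ d₂ j'; and (iii) every tardy agent-2 job is scheduled after every agent-1 job and after every early agent-2 job. -/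
open Finset Equiv

theorem Finset.sum_comp_swap_of_mem_iff_s9 {ι M : Type*} [DecidableEq ι] [AddCommMonoid M]
    (f : ι → M) {s : Finset ι} {i i' : ι} (h : i ∈ s ↔ i' ∈ s) :
    ∑ j ∈ s, f (swap i i' j) = ∑ j ∈ s, f j :=
  sum_equiv (swap i i') (fun j ↦ by rw [swap_apply_def]; split_ifs <;> simp_all) (by simp)

theorem Finset.sum_comp_swap_add_s9 {ι M : Type*} [DecidableEq ι] [AddCommMonoid M] (f : ι → M)
    {s : Finset ι} {i i' : ι} (hi : i ∈ s) (hi' : i' ∉ s) :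
    ∑ j ∈ s, f (swap i i' j) + f i = ∑ j ∈ s, f j + f i' := by
  have hfix : ∀ j ∈ s.erase i, f (swap i i' j) = f j := fun j hj ↦ congrArg f
    (swap_apply_of_ne_of_ne (ne_of_mem_erase hj) (ne_of_mem_of_not_mem (mem_of_mem_erase hj) hi'))
  rw [← add_sum_erase s _ hi, ← add_sum_erase s _ hi, sum_congr rfl hfix, swap_apply_left]
  abel

abbrev Schedule (ι : Type*) [Fintype ι] := ι ≃ Fin (Fintype.card ι)

namespace Schedule

variable {ι : Type*} [Fintype ι]

def ofKey {α : Type*} [LinearOrder α] (f : ι → α) (hf : Function.Injective f) : Schedule ι :=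
  letI := LinearOrder.lift' f hf
  (Fintype.orderIsoFinOfCardEq ι rfl).symm.toEquiv

theorem ofKey_lt_ofKey_iff {α : Type*} [LinearOrder α] {f : ι → α} (hf : Function.Injective f)
    {x y : ι} : ofKey f hf x < ofKey f hf y ↔ f x < f y :=
  letI := LinearOrder.lift' f hf
  (Fintype.orderIsoFinOfCardEq ι rfl).symm.lt_iff_lt

variable [DecidableEq ι]

/-- Keys of `moveAfter`: doubling the positions leaves a gap right after `b` for `a`. -/
def moveKey (σ : Schedule ι) (a b x : ι) : ℕ := if x = a then 2 * σ b + 1 else 2 * σ x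

theorem moveKey_injective (σ : Schedule ι) (a b : ι) : Function.Injective (moveKey σ a b) := by
  intro x y h
  unfold moveKey at h
  split_ifs at h with hx hy hy
  · exact hx.trans hy.symm
  · omega
  · omega
  · exact σ.injective (Fin.ext (by omega))

def moveAfter (σ : Schedule ι) (a b : ι) : Schedule ι := ofKey _ (moveKey_injective σ a b)

variable {σ : Schedule ι} {a b x y : ι}

theorem moveAfter_lt_moveAfter_iff (hx : x ≠ a) (hy : y ≠ a) :
    moveAfter σ a b x < moveAfter σ a b y ↔ σ x < σ y := by
  rw [moveAfter, ofKey_lt_ofKey_iff, Fin.lt_def]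
  simp only [moveKey, if_neg hx, if_neg hy]
  omega

theorem moveAfter_self_lt_iff (hy : y ≠ a) :
    moveAfter σ a b a < moveAfter σ a b y ↔ σ b < σ y := by
  rw [moveAfter, ofKey_lt_ofKey_iff, Fin.lt_def]
  simp only [moveKey, ↓reduceIte, if_neg hy]
  omega

theorem moveAfter_lt_self_iff (hx : x ≠ a) :
    moveAfter σ a b x < moveAfter σ a b a ↔ σ x ≤ σ b := by
  rw [moveAfter, ofKey_lt_ofKey_iff, Fin.le_def]
  simp only [moveKey, ↓reduceIte, if_neg hx]
  omega

theorem completionTime_moveAfter_le (p : ι → ℕ) (hab : σ a ≤ σ b) (hx : x ≠ a) :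
    completionTime p (moveAfter σ a b) x ≤ completionTime p σ x := by
  refine sum_le_sum_of_subset fun j hj ↦ ?_
  simp only [mem_filter, mem_univ, true_and, ← not_lt] at hj ⊢
  by_cases hja : j = a
  · subst hja
    rw [moveAfter_lt_self_iff hx, not_le] at hj
    exact fun h ↦ (h.trans_le hab).not_gt hj
  · rwa [moveAfter_lt_moveAfter_iff hx hja] at hj

theorem completionTime_moveAfter_self (p : ι → ℕ) (hab : σ a ≤ σ b) :
    completionTime p (moveAfter σ a b) a = completionTime p σ b := by
  refine sum_congr (filter_congr fun j _ ↦ ?_) fun _ _ ↦ rfl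
  by_cases hja : j = a
  · subst hja
    simpa using hab
  · rw [le_iff_lt_or_eq, moveAfter_lt_self_iff hja, (moveAfter σ a b).injective.eq_iff]
    simp [hja]

variable {i i' : ι}

theorem completionTime_swap_trans_apply (p : ι → ℕ) (x : ι) :
    completionTime p ((swap i i').trans σ) (swap i i' x) = completionTime (p ∘ swap i i') σ x :=
  sum_equiv (swap i i') (by simp) (by simp)

theorem completionTime_comp_swap_add (p : ι → ℕ) (hi : σ i ≤ σ x) (hi' : σ x < σ i') :
    completionTime (p ∘ swap i i') σ x + p i = completionTime p σ x + p i' :=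
  Finset.sum_comp_swap_add_s9 p (by simpa) (by simpa)

theorem completionTime_comp_swap_le (p : ι → ℕ) (hσ : σ i ≤ σ i') (hp : p i' ≤ p i) (x : ι) :
    completionTime (p ∘ swap i i') σ x ≤ completionTime p σ x := by
  by_cases hx : σ i ≤ σ x ∧ σ x < σ i'
  · have := completionTime_comp_swap_add p hx.1 hx.2
    omega
  · refine (Finset.sum_comp_swap_of_mem_iff_s9 p ?_).le
    simp only [mem_filter, mem_univ, true_and, Fin.le_def, Fin.lt_def] at hx hσ ⊢
    omega

def crossingPairs (σ : Schedule ι) (L : Finset ι) : Finset (ι × ι) :=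
  {z | z.1 ∈ L ∧ z.2 ∉ L ∧ σ z.1 < σ z.2}

def inversionPairs (σ : Schedule ι) (d : ι → ℕ) (E : Finset ι) : Finset (ι × ι) :=
  {z | z.1 ∈ E ∧ z.2 ∈ E ∧ σ z.1 < σ z.2 ∧ d z.2 < d z.1}

variable {L E : Finset ι} {d : ι → ℕ}

theorem crossingPairs_moveAfter_ssubset (ha : a ∈ L) (hb : b ∉ L) (hab : σ a < σ b) :
    crossingPairs (moveAfter σ a b) L ⊂ crossingPairs σ L := by
  have hsub : crossingPairs (moveAfter σ a b) L ⊆ crossingPairs σ L := by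
    intro ⟨t, y⟩ h
    simp only [crossingPairs, mem_filter, mem_univ, true_and] at h ⊢
    obtain ⟨ht, hy, hty⟩ := h
    have hya : y ≠ a := (ne_of_mem_of_not_mem ha hy).symm
    refine ⟨ht, hy, ?_⟩
    by_cases hta : t = a
    · subst hta
      exact hab.trans ((moveAfter_self_lt_iff hya).1 hty)
    · exact (moveAfter_lt_moveAfter_iff hta hya).1 hty
  refine (ssubset_iff_of_subset hsub).2 ⟨(a, b), ?_, ?_⟩
  · simpa [crossingPairs] using ⟨ha, hb, hab⟩
  · simp [crossingPairs, moveAfter_self_lt_iff (ne_of_mem_of_not_mem ha hb).symm]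

theorem crossingPairs_moveAfter_subset (ha : a ∉ L) (hL : ∀ t ∈ L, σ b < σ t) :
    crossingPairs (moveAfter σ a b) L ⊆ crossingPairs σ L := by
  intro ⟨t, y⟩ h
  simp only [crossingPairs, mem_filter, mem_univ, true_and] at h ⊢
  obtain ⟨ht, hy, hty⟩ := h
  have hta : t ≠ a := ne_of_mem_of_not_mem ht ha
  refine ⟨ht, hy, ?_⟩
  by_cases hya : y = a
  · subst hya
    exact absurd ((moveAfter_lt_self_iff hta).1 hty) (hL t ht).not_ge
  · exact (moveAfter_lt_moveAfter_iff hta hya).1 hty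

theorem card_crossingPairs_swap_trans (hi : i ∉ L) (hi' : i' ∉ L) :
    #(crossingPairs ((swap i i').trans σ) L) = #(crossingPairs σ L) := by
  have hfix : ∀ t ∈ L, swap i i' t = t := fun t ht ↦
    swap_apply_of_ne_of_ne (ne_of_mem_of_not_mem ht hi) (ne_of_mem_of_not_mem ht hi')
  have hmem : ∀ y, swap i i' y ∈ L ↔ y ∈ L := fun y ↦ by
    rw [swap_apply_def]
    split_ifs <;> simp_all
  refine card_equiv ((Equiv.refl ι).prodCongr (swap i i')) fun ⟨t, y⟩ ↦ ?_
  simp only [crossingPairs, mem_filter, mem_univ, true_and]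
  simp only [prodCongr_apply, Prod.map, refl_apply, trans_apply, hmem]
  exact and_congr_right fun ht ↦ by rw [hfix t ht]

theorem inversionPairs_swap_trans (hi : i ∉ E) (hi' : i' ∉ E) :
    inversionPairs ((swap i i').trans σ) d E = inversionPairs σ d E := by
  refine filter_congr fun ⟨u, v⟩ _ ↦ and_congr_right fun hu ↦ and_congr_right fun hv ↦ ?_
  simp only [trans_apply, swap_apply_of_ne_of_ne (ne_of_mem_of_not_mem hu hi)
    (ne_of_mem_of_not_mem hu hi'), swap_apply_of_ne_of_ne (ne_of_mem_of_not_mem hv hi)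
    (ne_of_mem_of_not_mem hv hi')]

theorem inversionPairs_moveAfter_of_notMem (ha : a ∉ E) :
    inversionPairs (moveAfter σ a b) d E = inversionPairs σ d E :=
  filter_congr fun ⟨u, v⟩ _ ↦ and_congr_right fun hu ↦ and_congr_right fun hv ↦ by
    rw [moveAfter_lt_moveAfter_iff (ne_of_mem_of_not_mem hu ha) (ne_of_mem_of_not_mem hv ha)]

theorem inversionPairs_moveAfter_ssubset (ha : a ∈ E) (hab : (a, b) ∈ inversionPairs σ d E)
    (hmax : ∀ u, (u, b) ∈ inversionPairs σ d E → d u ≤ d a) :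
    inversionPairs (moveAfter σ a b) d E ⊂ inversionPairs σ d E := by
  simp only [inversionPairs, mem_filter, mem_univ, true_and] at hab hmax
  obtain ⟨-, hb, hσab, hdab⟩ := hab
  have hsub : inversionPairs (moveAfter σ a b) d E ⊆ inversionPairs σ d E := by
    intro ⟨u, v⟩ h
    simp only [inversionPairs, mem_filter, mem_univ, true_and] at h ⊢
    obtain ⟨hu, hv, huv, hduv⟩ := h
    refine ⟨hu, hv, ?_, hduv⟩
    by_cases hua : u = a <;> by_cases hva : v = a
    · subst hua hva
      exact absurd huv (lt_irrefl _)
    · subst hua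
      exact hσab.trans ((moveAfter_self_lt_iff hva).1 huv)
    · subst hva
      rw [moveAfter_lt_self_iff hua] at huv
      have hub : u ≠ b := by
        rintro rfl
        exact hdab.not_gt hduv
      have hσub : σ u < σ b := huv.lt_of_ne (σ.injective.ne hub)
      exact absurd (hmax u ⟨hu, hb, hσub, hdab.trans hduv⟩) hduv.not_ge
    · exact (moveAfter_lt_moveAfter_iff hua hva).1 huv
  refine (ssubset_iff_of_subset hsub).2 ⟨(a, b), ?_, ?_⟩
  · simpa [inversionPairs] using ⟨ha, hb, hσab, hdab⟩
  · have hba : b ≠ a := by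
      rintro rfl
      exact hσab.false
    simp [inversionPairs, moveAfter_self_lt_iff hba]

end Schedule

namespace TwoAgent

open Schedule

variable {n k : ℕ} (p₁ : Fin n → ℕ) (p₂ d₂ : Fin k → ℕ)

def late (σ : Schedule (Fin n ⊕ Fin k)) : Finset (Fin k) :=
  {j | d₂ j < completionTime (Sum.elim p₁ p₂) σ (.inr j)}

def agent1Cost (σ : Schedule (Fin n ⊕ Fin k)) : ℕ :=
  ∑ i, completionTime (Sum.elim p₁ p₂) σ (.inl i)

def lateJobs (σ : Schedule (Fin n ⊕ Fin k)) : Finset (Fin n ⊕ Fin k) :=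
  (late p₁ p₂ d₂ σ).map .inr

def earlyJobs (σ : Schedule (Fin n ⊕ Fin k)) : Finset (Fin n ⊕ Fin k) :=
  (late p₁ p₂ d₂ σ)ᶜ.map .inr

/-- Agent-1 jobs carry the dummy due date `0`; they never belong to `earlyJobs`. -/
def potential (σ : Schedule (Fin n ⊕ Fin k)) : ℕ ×ₗ ℕ :=
  toLex (#(late p₁ p₂ d₂ σ), #(crossingPairs σ (lateJobs p₁ p₂ d₂ σ)) + agent1Cost p₁ p₂ σ +
    #(inversionPairs σ (Sum.elim 0 d₂) (earlyJobs p₁ p₂ d₂ σ)))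

structure Improves (σ' σ : Schedule (Fin n ⊕ Fin k)) : Prop where
  late_subset : late p₁ p₂ d₂ σ' ⊆ late p₁ p₂ d₂ σ
  agent1Cost_le : agent1Cost p₁ p₂ σ' ≤ agent1Cost p₁ p₂ σ
  potential_lt : potential p₁ p₂ d₂ σ' < potential p₁ p₂ d₂ σ

variable {p₁ p₂ d₂} {σ' σ : Schedule (Fin n ⊕ Fin k)}

theorem improves_of_late_subset (hlate : late p₁ p₂ d₂ σ' ⊆ late p₁ p₂ d₂ σ)
    (hcost : agent1Cost p₁ p₂ σ' ≤ agent1Cost p₁ p₂ σ)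
    (hrest : late p₁ p₂ d₂ σ' = late p₁ p₂ d₂ σ →
      #(crossingPairs σ' (lateJobs p₁ p₂ d₂ σ)) + agent1Cost p₁ p₂ σ' +
          #(inversionPairs σ' (Sum.elim 0 d₂) (earlyJobs p₁ p₂ d₂ σ)) <
        #(crossingPairs σ (lateJobs p₁ p₂ d₂ σ)) + agent1Cost p₁ p₂ σ +
          #(inversionPairs σ (Sum.elim 0 d₂) (earlyJobs p₁ p₂ d₂ σ))) :
    Improves p₁ p₂ d₂ σ' σ := by
  refine ⟨hlate, hcost, Prod.Lex.toLex_lt_toLex.2 ?_⟩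
  rcases hlate.ssubset_or_eq with hlt | heq
  · exact .inl (card_lt_card hlt)
  · refine .inr ⟨congrArg card heq, ?_⟩
    simpa only [lateJobs, earlyJobs, heq] using hrest heq

local notation "C" => completionTime (Sum.elim p₁ p₂)

theorem exists_improves_of_late_lt {j : Fin k} (hj : j ∈ late p₁ p₂ d₂ σ)
    {y : Fin n ⊕ Fin k} (hy : y ∉ lateJobs p₁ p₂ d₂ σ) (hjy : σ (.inr j) < σ y) :
    ∃ σ', Improves p₁ p₂ d₂ σ' σ := by
  set σ' := moveAfter σ (.inr j) y
  have hC : ∀ x ≠ .inr j, C σ' x ≤ C σ x := fun x hx ↦ completionTime_moveAfter_le _ hjy.le hx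
  have hcost : agent1Cost p₁ p₂ σ' ≤ agent1Cost p₁ p₂ σ :=
    sum_le_sum fun i _ ↦ hC _ Sum.inl_ne_inr
  have hlate : late p₁ p₂ d₂ σ' ⊆ late p₁ p₂ d₂ σ := by
    intro t ht
    by_cases htj : t = j
    · exact htj ▸ hj
    · simp only [late, mem_filter, mem_univ, true_and] at ht ⊢
      exact ht.trans_le (hC _ (by simpa using htj))
  refine ⟨σ', improves_of_late_subset hlate hcost fun _ ↦ ?_⟩
  have hcross :
      #(crossingPairs σ' (lateJobs p₁ p₂ d₂ σ)) < #(crossingPairs σ (lateJobs p₁ p₂ d₂ σ)) :=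
    card_lt_card (crossingPairs_moveAfter_ssubset (by simpa [lateJobs] using hj) hy hjy)
  have hinv : inversionPairs σ' (Sum.elim 0 d₂) (earlyJobs p₁ p₂ d₂ σ) =
      inversionPairs σ (Sum.elim 0 d₂) (earlyJobs p₁ p₂ d₂ σ) :=
    inversionPairs_moveAfter_of_notMem (by simpa [earlyJobs] using hj)
  rw [hinv]
  omega

theorem exists_improves_of_spt_inversion {i i' : Fin n} (hσ : σ (.inl i) < σ (.inl i'))
    (hp : p₁ i' < p₁ i) : ∃ σ', Improves p₁ p₂ d₂ σ' σ := by
  set σ' := (swap (.inl i : Fin n ⊕ Fin k) (.inl i')).trans σ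
  have hC : ∀ x, C σ' (swap (.inl i) (.inl i') x) ≤ C σ x := fun x ↦
    (completionTime_swap_trans_apply _ x).trans_le (completionTime_comp_swap_le _ hσ.le hp.le x)
  have hC₂ : ∀ t : Fin k, C σ' (.inr t) ≤ C σ (.inr t) := fun t ↦ by
    simpa [swap_apply_of_ne_of_ne] using hC (.inr t)
  have hstrict : C σ' (.inl i') < C σ (.inl i) := by
    have h := completionTime_comp_swap_add (Sum.elim p₁ p₂) le_rfl hσ
    rw [← completionTime_swap_trans_apply, swap_apply_left] at h
    have h' : C σ' (.inl i') + p₁ i = C σ (.inl i) + p₁ i' := h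
    omega
  have hcost : agent1Cost p₁ p₂ σ' < agent1Cost p₁ p₂ σ :=
    calc agent1Cost p₁ p₂ σ' = ∑ x, C σ' (.inl (swap i i' x)) :=
          (Equiv.sum_comp (swap i i') _).symm
      _ = ∑ x, C σ' (swap (.inl i) (.inl i') (.inl x)) := by
        simp only [Sum.inl_injective.swap_apply]
      _ < agent1Cost p₁ p₂ σ :=
          sum_lt_sum (fun x _ ↦ hC _) ⟨i, mem_univ _, by simpa using hstrict⟩
  have hlate : late p₁ p₂ d₂ σ' ⊆ late p₁ p₂ d₂ σ := fun t ht ↦ by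
    simp only [late, mem_filter, mem_univ, true_and] at ht ⊢
    exact ht.trans_le (hC₂ t)
  refine ⟨σ', improves_of_late_subset hlate hcost.le fun _ ↦ ?_⟩
  rw [card_crossingPairs_swap_trans (by simp [lateJobs]) (by simp [lateJobs]),
    inversionPairs_swap_trans (by simp [earlyJobs]) (by simp [earlyJobs])]
  omega

theorem exists_improves_of_edd_inversion
    (hlast : ∀ t ∈ lateJobs p₁ p₂ d₂ σ, ∀ y ∉ lateJobs p₁ p₂ d₂ σ, σ y < σ t)
    (hinv : (inversionPairs σ (Sum.elim 0 d₂) (earlyJobs p₁ p₂ d₂ σ)).Nonempty) :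
    ∃ σ', Improves p₁ p₂ d₂ σ' σ := by
  -- Moving the first job of the inversion with the largest such due date creates no new inversion.
  obtain ⟨⟨a, b⟩, hab, hmax⟩ := exists_max_image _ (fun z ↦ Sum.elim 0 d₂ z.1) hinv
  obtain ⟨ha, hb, hσab, hdab⟩ := (mem_filter.1 hab).2
  dsimp only at ha hb hσab hdab
  obtain ⟨j, hj, rfl⟩ : ∃ j ∉ late p₁ p₂ d₂ σ, .inr j = a := by simpa [earlyJobs] using ha
  obtain ⟨j', hj', rfl⟩ : ∃ j' ∉ late p₁ p₂ d₂ σ, .inr j' = b := by simpa [earlyJobs] using hb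
  set σ' := moveAfter σ (.inr j) (.inr j')
  have hC : ∀ x ≠ .inr j, C σ' x ≤ C σ x := fun x hx ↦ completionTime_moveAfter_le _ hσab.le hx
  have hcost : agent1Cost p₁ p₂ σ' ≤ agent1Cost p₁ p₂ σ :=
    sum_le_sum fun i _ ↦ hC _ Sum.inl_ne_inr
  have hlate : late p₁ p₂ d₂ σ' ⊆ late p₁ p₂ d₂ σ := by
    intro t ht
    simp only [late, mem_filter, mem_univ, true_and] at ht hj' ⊢
    by_cases htj : t = j
    · subst htj
      rw [completionTime_moveAfter_self _ hσab.le] at ht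
      simp only [Sum.elim_inr] at hdab
      omega
    · exact ht.trans_le (hC _ (by simpa using htj))
  refine ⟨σ', improves_of_late_subset hlate hcost fun _ ↦ ?_⟩
  have hcross :
      #(crossingPairs σ' (lateJobs p₁ p₂ d₂ σ)) ≤ #(crossingPairs σ (lateJobs p₁ p₂ d₂ σ)) :=
    card_le_card (crossingPairs_moveAfter_subset (by simpa [lateJobs] using hj)
      fun t ht ↦ hlast t ht _ (by simpa [lateJobs] using hj'))
  have hinv' : #(inversionPairs σ' (Sum.elim 0 d₂) (earlyJobs p₁ p₂ d₂ σ)) <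
      #(inversionPairs σ (Sum.elim 0 d₂) (earlyJobs p₁ p₂ d₂ σ)) :=
    card_lt_card (inversionPairs_moveAfter_ssubset ha hab fun u hu ↦ hmax _ hu)
  omega

variable (p₁ p₂ d₂) in
def Unimprovable (σ : Schedule (Fin n ⊕ Fin k)) : Prop := ∀ σ', ¬ Improves p₁ p₂ d₂ σ' σ

theorem Unimprovable.lateJobs_last (hopt : Unimprovable p₁ p₂ d₂ σ) :
    ∀ t ∈ lateJobs p₁ p₂ d₂ σ, ∀ y ∉ lateJobs p₁ p₂ d₂ σ, σ y < σ t := by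
  intro t ht y hy
  obtain ⟨j, hj, rfl⟩ : ∃ j ∈ late p₁ p₂ d₂ σ, .inr j = t := by simpa [lateJobs] using ht
  refine lt_of_not_ge fun h ↦ ?_
  obtain ⟨σ', h'⟩ := exists_improves_of_late_lt hj hy
    (h.lt_of_ne (σ.injective.ne (ne_of_mem_of_not_mem ht hy)))
  exact hopt σ' h'

theorem Unimprovable.agent1_spt (hopt : Unimprovable p₁ p₂ d₂ σ) :
    ∀ i i' : Fin n, σ (.inl i) < σ (.inl i') → p₁ i ≤ p₁ i' := by
  intro i i' hσ
  refine le_of_not_gt fun hp ↦ ?_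
  obtain ⟨σ', h'⟩ := exists_improves_of_spt_inversion hσ hp
  exact hopt σ' h'

theorem Unimprovable.early_edd (hopt : Unimprovable p₁ p₂ d₂ σ) :
    ∀ j j' : Fin k, C σ (.inr j) ≤ d₂ j → C σ (.inr j') ≤ d₂ j' →
    σ (.inr j) < σ (.inr j') → d₂ j ≤ d₂ j' := by
  intro j j' hj hj' hσ
  refine le_of_not_gt fun hd ↦ ?_
  obtain ⟨σ', h'⟩ := exists_improves_of_edd_inversion hopt.lateJobs_last
    ⟨(.inr j, .inr j'), by simpa [inversionPairs, earlyJobs, late, hj, hj'] using ⟨hσ, hd⟩⟩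
  exact hopt σ' h'

end TwoAgent

open TwoAgent in
/-- Lemma 6 (structural lemma) for
`1 | ∑ C_j^{(1)} ≤ A₁, ∑ w_j^{(2)} U_j^{(2)} ≤ A₂ |`:
if a feasible schedule exists, then one exists in which (i) the agent-1 jobs
follow the SPT rule, (ii) the early agent-2 jobs follow the EDD rule, and
(iii) every tardy agent-2 job is scheduled after every agent-1 job and after
every early agent-2 job. -/
theorem structural_lemma_sumC_weightedU
    (n k : ℕ) (p₁ : Fin n → ℕ) (p₂ d₂ w₂ : Fin k → ℕ) (A₁ A₂ : ℕ)
    (h : ∃ σ : (Fin n ⊕ Fin k) ≃ Fin (Fintype.card (Fin n ⊕ Fin k)),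
      (∑ i, completionTime (Sum.elim p₁ p₂) σ (Sum.inl i) ≤ A₁) ∧
      (∑ j ∈ Finset.univ.filter
          (fun j : Fin k => d₂ j < completionTime (Sum.elim p₁ p₂) σ (Sum.inr j)),
        w₂ j) ≤ A₂) :
    ∃ σ' : (Fin n ⊕ Fin k) ≃ Fin (Fintype.card (Fin n ⊕ Fin k)),
      (∑ i, completionTime (Sum.elim p₁ p₂) σ' (Sum.inl i) ≤ A₁) ∧
      ((∑ j ∈ Finset.univ.filter
          (fun j : Fin k => d₂ j < completionTime (Sum.elim p₁ p₂) σ' (Sum.inr j)),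
        w₂ j) ≤ A₂) ∧
      -- (i) agent-1 jobs in SPT order
      (∀ i i' : Fin n, σ' (Sum.inl i) < σ' (Sum.inl i') → p₁ i ≤ p₁ i') ∧
      -- (ii) early agent-2 jobs in EDD order
      (∀ j j' : Fin k,
        completionTime (Sum.elim p₁ p₂) σ' (Sum.inr j) ≤ d₂ j →
        completionTime (Sum.elim p₁ p₂) σ' (Sum.inr j') ≤ d₂ j' →
        σ' (Sum.inr j) < σ' (Sum.inr j') → d₂ j ≤ d₂ j') ∧
      -- (iii) tardy agent-2 jobs are scheduled last
      (∀ j : Fin k, d₂ j < completionTime (Sum.elim p₁ p₂) σ' (Sum.inr j) →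
        (∀ i : Fin n, σ' (Sum.inl i) < σ' (Sum.inr j)) ∧
        (∀ j' : Fin k, completionTime (Sum.elim p₁ p₂) σ' (Sum.inr j') ≤ d₂ j' →
          σ' (Sum.inr j') < σ' (Sum.inr j))) := by
  obtain ⟨σ₀, hσ₀⟩ := h
  obtain ⟨σ, hσ, hmin⟩ := exists_min_image
    {σ | agent1Cost p₁ p₂ σ ≤ A₁ ∧ ∑ j ∈ late p₁ p₂ d₂ σ, w₂ j ≤ A₂} (potential p₁ p₂ d₂)
    ⟨σ₀, mem_filter.2 ⟨mem_univ _, hσ₀⟩⟩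
  simp only [mem_filter, mem_univ, true_and] at hσ
  have hopt : Unimprovable p₁ p₂ d₂ σ := fun σ' h' ↦ h'.potential_lt.not_ge <| hmin σ' <| by
    simpa using ⟨h'.agent1Cost_le.trans hσ.1, (sum_le_sum_of_subset h'.late_subset).trans hσ.2⟩
  have hlast := hopt.lateJobs_last
  refine ⟨σ, hσ.1, hσ.2, hopt.agent1_spt, hopt.early_edd,
    fun j hj ↦ ⟨fun i ↦ ?_, fun j' hj' ↦ ?_⟩⟩
  · exact hlast _ (by simpa [lateJobs, late] using hj) _ (by simp [lateJobs])
  · exact hlast _ (by simpa [lateJobs, late] using hj) _ (by simpa [lateJobs, late] using hj')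
end

section
/- Let the agent-1 jobs have processing times p₁ : Fin n → ℕ and due dates d₁ : Fin n → ℕ, and let the agent-2 jobs have processing times p₂ : Fin k → ℕ and weights w₂ : Fin k → ℕ; let A₁, A₂ : ℕ. If there exists a schedule σ with at most A₁ tardy agent-1 jobs and ∑ j, w₂ j · C (inr j) ≤ A₂, then there exists a schedule σ' with at most A₁ tardy agent-1 jobs and ∑ j, w₂ j · C (inr j) ≤ A₂ in which additionally: (i) every tardy agent-1 job is scheduled after every early agent-1 job and after every agent-2 job; and (ii) for all early agent-1 jobs i, i', if σ' (inl i) < σ' (inl i') then d₁ i ≤ d₁ i'. -/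
/-!
Take a feasible schedule `σ` with the fewest tardy agent-1 jobs and re-sequence it: tardy jobs go
last, agent-2 jobs keep their places, and each early job `a` moves to just behind the last early
job `a'` of `σ` with `d a' ≤ d a`. No job that is not tardy acquires a predecessor that did not
already precede its new slot in `σ`, so agent-2 completion times do not grow and `a` still
completes by `C a' ≤ d a' ≤ d a`. By minimality no tardy job becomes early, so the tardy set is
unchanged, and (i) and (ii) can be read off the sorting key.
-/

open Finset

theorem completionTime_le_completionTime {ι : Type*} [Fintype ι] (p : ι → ℕ)
    {σ τ : ι ≃ Fin (Fintype.card ι)} {i j : ι} (h : ∀ x, τ x ≤ τ i → σ x ≤ σ j) :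
    completionTime p τ i ≤ completionTime p σ j :=
  sum_le_sum_of_subset fun x hx => by
    simp only [mem_filter, mem_univ, true_and] at hx ⊢
    exact h x hx

theorem exists_equiv_fin_le_iff {ι κ : Type*} [Fintype ι] [LinearOrder κ] (f : ι → κ)
    (hf : Function.Injective f) :
    ∃ σ : ι ≃ Fin (Fintype.card ι), ∀ x y, σ x ≤ σ y ↔ f x ≤ f y := by
  let := LinearOrder.lift' f hf
  exact ⟨(Fintype.orderIsoFinOfCardEq ι rfl).symm.toEquiv, fun _ _ =>
    (Fintype.orderIsoFinOfCardEq ι rfl).symm.le_iff_le⟩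

namespace TwoAgent

variable {α β : Type*} [Fintype α] [Fintype β] (p : α ⊕ β → ℕ) (d : α → ℕ)
  (σ : α ⊕ β ≃ Fin (Fintype.card (α ⊕ β)))

def tardyJobs : Finset α :=
  univ.filter fun a => d a < completionTime p σ (.inl a)

def eddSlot (a : α) : ℕ :=
  (univ.filter fun a' => completionTime p σ (.inl a') ≤ d a' ∧ d a' ≤ d a).sup
    fun a' => (σ (.inl a') : ℕ)

variable {p d σ}

theorem le_eddSlot {a : α} (ha : completionTime p σ (.inl a) ≤ d a) :
    (σ (.inl a) : ℕ) ≤ eddSlot p d σ a :=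
  le_sup (f := fun a' => (σ (.inl a') : ℕ)) (mem_filter.2 ⟨mem_univ a, ha, le_rfl⟩)

theorem exists_eddSlot_eq {a : α} (ha : completionTime p σ (.inl a) ≤ d a) :
    ∃ a', completionTime p σ (.inl a') ≤ d a' ∧ d a' ≤ d a ∧
      eddSlot p d σ a = σ (.inl a') := by
  have := exists_mem_eq_sup
    (univ.filter fun a' => completionTime p σ (.inl a') ≤ d a' ∧ d a' ≤ d a)
    ⟨a, by simp [ha]⟩ fun a' => (σ (.inl a') : ℕ)
  simpa [eddSlot, and_assoc] using this

theorem eddSlot_mono {a a' : α} (h : d a ≤ d a') : eddSlot p d σ a ≤ eddSlot p d σ a' :=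
  sup_mono fun _ hx => by
    simp only [mem_filter] at hx ⊢
    exact ⟨hx.1, hx.2.1, hx.2.2.trans h⟩

variable (p d σ)

/-- Early jobs sharing a slot are ordered by due date; the last coordinate, the old position,
makes the key injective. -/
def rearrangeKey : α ⊕ β → ℕ ×ₗ ℕ ×ₗ ℕ
  | .inl a =>
    if completionTime p σ (.inl a) ≤ d a then toLex (eddSlot p d σ a, toLex (d a, σ (.inl a)))
    else toLex (Fintype.card (α ⊕ β), toLex (0, σ (.inl a)))
  | .inr b => toLex (σ (.inr b), toLex (0, σ (.inr b)))

theorem rearrangeKey_injective : Function.Injective (rearrangeKey p d σ) := by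
  have key_snd : ∀ x, (ofLex (ofLex (rearrangeKey p d σ x)).2).2 = σ x := by
    rintro (a | b)
    · simp only [rearrangeKey]; split_ifs <;> rfl
    · rfl
  intro x y h
  exact σ.injective (Fin.ext (by rw [← key_snd x, h, key_snd]))

noncomputable def rearrange : α ⊕ β ≃ Fin (Fintype.card (α ⊕ β)) :=
  (exists_equiv_fin_le_iff _ (rearrangeKey_injective p d σ)).choose

variable {p d σ}

theorem rearrange_le_iff {x y : α ⊕ β} :
    rearrange p d σ x ≤ rearrange p d σ y ↔ rearrangeKey p d σ x ≤ rearrangeKey p d σ y :=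
  (exists_equiv_fin_le_iff _ (rearrangeKey_injective p d σ)).choose_spec x y

theorem rearrange_lt_iff {x y : α ⊕ β} :
    rearrange p d σ x < rearrange p d σ y ↔ rearrangeKey p d σ x < rearrangeKey p d σ y := by
  simp only [lt_iff_not_ge, rearrange_le_iff]

theorem val_le_rearrangeKey_fst (x : α ⊕ β) :
    (σ x : ℕ) ≤ (ofLex (rearrangeKey p d σ x)).1 := by
  rcases x with a | b
  · simp only [rearrangeKey]
    split_ifs with ha
    · exact le_eddSlot ha
    · exact (σ (.inl a)).isLt.le
  · exact le_rfl

theorem val_le_of_rearrangeKey_le {x y : α ⊕ β}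
    (h : rearrangeKey p d σ x ≤ rearrangeKey p d σ y) :
    (σ x : ℕ) ≤ (ofLex (rearrangeKey p d σ y)).1 :=
  (val_le_rearrangeKey_fst x).trans (Prod.Lex.monotone_fst _ _ h)

theorem completionTime_rearrange_inr_le (b : β) :
    completionTime p (rearrange p d σ) (.inr b) ≤ completionTime p σ (.inr b) :=
  completionTime_le_completionTime p fun _ hx =>
    Fin.le_def.2 (val_le_of_rearrangeKey_le (rearrange_le_iff.1 hx))

theorem completionTime_rearrange_inl_le {a : α} (ha : completionTime p σ (.inl a) ≤ d a) :
    completionTime p (rearrange p d σ) (.inl a) ≤ d a := by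
  obtain ⟨a', ha', hd, hslot⟩ := exists_eddSlot_eq ha
  have key_fst : (ofLex (rearrangeKey p d σ (.inl a))).1 = σ (.inl a') := by
    simp [rearrangeKey, ha, hslot]
  calc completionTime p (rearrange p d σ) (.inl a)
      ≤ completionTime p σ (.inl a') := completionTime_le_completionTime p fun _ hx =>
        Fin.le_def.2 (key_fst ▸ val_le_of_rearrangeKey_le (rearrange_le_iff.1 hx))
    _ ≤ d a := ha'.trans hd

theorem tardyJobs_rearrange_subset : tardyJobs p d (rearrange p d σ) ⊆ tardyJobs p d σ := by
  intro a
  simp only [tardyJobs, mem_filter, mem_univ, true_and]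
  contrapose!
  exact completionTime_rearrange_inl_le

theorem rearrange_inl_lt_of_tardy {a t : α} (ha : completionTime p σ (.inl a) ≤ d a)
    (ht : d t < completionTime p σ (.inl t)) :
    rearrange p d σ (.inl a) < rearrange p d σ (.inl t) := by
  obtain ⟨a', -, -, hslot⟩ := exists_eddSlot_eq ha
  rw [rearrange_lt_iff]
  simp only [rearrangeKey, ha, ht.not_ge, if_true, if_false, hslot]
  exact Prod.Lex.toLex_lt_toLex.2 (.inl (σ (.inl a')).isLt)

theorem rearrange_inr_lt_of_tardy (b : β) {t : α} (ht : d t < completionTime p σ (.inl t)) :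
    rearrange p d σ (.inr b) < rearrange p d σ (.inl t) := by
  rw [rearrange_lt_iff]
  simp only [rearrangeKey, ht.not_ge, if_false]
  exact Prod.Lex.toLex_lt_toLex.2 (.inl (σ (.inr b)).isLt)

theorem dueDate_le_of_rearrange_lt {a a' : α} (ha : completionTime p σ (.inl a) ≤ d a)
    (ha' : completionTime p σ (.inl a') ≤ d a')
    (h : rearrange p d σ (.inl a) < rearrange p d σ (.inl a')) : d a ≤ d a' := by
  by_contra! hd
  rw [rearrange_lt_iff] at h
  simp only [rearrangeKey, ha, ha', if_true] at h
  refine h.not_gt (Prod.Lex.toLex_lt_toLex.2 ?_)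
  rcases (eddSlot_mono (σ := σ) hd.le).lt_or_eq with hlt | heq
  · exact .inl hlt
  · exact .inr ⟨heq, Prod.Lex.toLex_lt_toLex.2 (.inl hd)⟩

end TwoAgent

open TwoAgent

/-- Structural content of Lemma 7 for
`1 | ∑ U_j^{(1)} ≤ A₁, ∑ w_j^{(2)} C_j^{(2)} ≤ A₂ |`:
if a schedule with at most `A₁` tardy agent-1 jobs and agent-2 weighted total
completion time at most `A₂` exists, then one exists in which additionally
(i) every tardy agent-1 job is scheduled after every early agent-1 job and
after every agent-2 job, and (ii) the early agent-1 jobs follow the EDD rule. -/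
theorem structural_lemma_sumU_weightedC
    (n k : ℕ) (p₁ d₁ : Fin n → ℕ) (p₂ w₂ : Fin k → ℕ) (A₁ A₂ : ℕ)
    (h : ∃ σ : (Fin n ⊕ Fin k) ≃ Fin (Fintype.card (Fin n ⊕ Fin k)),
      (Finset.univ.filter
        (fun i : Fin n => d₁ i < completionTime (Sum.elim p₁ p₂) σ (Sum.inl i))).card
          ≤ A₁ ∧
      (∑ j, w₂ j * completionTime (Sum.elim p₁ p₂) σ (Sum.inr j)) ≤ A₂) :
    ∃ σ' : (Fin n ⊕ Fin k) ≃ Fin (Fintype.card (Fin n ⊕ Fin k)),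
      (Finset.univ.filter
        (fun i : Fin n => d₁ i < completionTime (Sum.elim p₁ p₂) σ' (Sum.inl i))).card
          ≤ A₁ ∧
      (∑ j, w₂ j * completionTime (Sum.elim p₁ p₂) σ' (Sum.inr j)) ≤ A₂ ∧
      -- (i) tardy agent-1 jobs are scheduled last
      (∀ i : Fin n, d₁ i < completionTime (Sum.elim p₁ p₂) σ' (Sum.inl i) →
        (∀ i' : Fin n, completionTime (Sum.elim p₁ p₂) σ' (Sum.inl i') ≤ d₁ i' →
          σ' (Sum.inl i') < σ' (Sum.inl i)) ∧
        (∀ j : Fin k, σ' (Sum.inr j) < σ' (Sum.inl i))) ∧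
      -- (ii) early agent-1 jobs in EDD order
      (∀ i i' : Fin n,
        completionTime (Sum.elim p₁ p₂) σ' (Sum.inl i) ≤ d₁ i →
        completionTime (Sum.elim p₁ p₂) σ' (Sum.inl i') ≤ d₁ i' →
        σ' (Sum.inl i) < σ' (Sum.inl i') → d₁ i ≤ d₁ i') := by
  obtain ⟨σ, ⟨hA₁, hA₂⟩, hmin⟩ := Set.exists_min_image _
    (fun σ => (tardyJobs (Sum.elim p₁ p₂) d₁ σ).card) (Set.toFinite _) h
  set σ' := rearrange (Sum.elim p₁ p₂) d₁ σ
  have hA₂' : ∑ j, w₂ j * completionTime (Sum.elim p₁ p₂) σ' (.inr j) ≤ A₂ :=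
    (sum_le_sum fun j _ => Nat.mul_le_mul_left _ (completionTime_rearrange_inr_le j)).trans hA₂
  have htardy : tardyJobs (Sum.elim p₁ p₂) d₁ σ' = tardyJobs (Sum.elim p₁ p₂) d₁ σ :=
    eq_of_subset_of_card_le tardyJobs_rearrange_subset
      (hmin σ' ⟨(card_le_card tardyJobs_rearrange_subset).trans hA₁, hA₂'⟩)
  have hearly (i : Fin n) : completionTime (Sum.elim p₁ p₂) σ' (.inl i) ≤ d₁ i ↔
      completionTime (Sum.elim p₁ p₂) σ (.inl i) ≤ d₁ i := by
    simpa [tardyJobs] using (Finset.ext_iff.1 htardy i).not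
  refine ⟨σ', (congrArg card htardy).trans_le hA₁, hA₂', fun i hi => ?_,
    fun i i' hi hi' => dueDate_le_of_rearrange_lt ((hearly i).1 hi) ((hearly i').1 hi')⟩
  have hi : d₁ i < completionTime (Sum.elim p₁ p₂) σ (.inl i) :=
    lt_of_not_ge (mt (hearly i).2 hi.not_ge)
  exact ⟨fun i' hi' => rearrange_inl_lt_of_tardy ((hearly i').1 hi') hi,
    fun j => rearrange_inr_lt_of_tardy j hi⟩
end

section
/- Let the agent-1 jobs have processing times p₁ : Fin n → ℕ and due dates d₁ : Fin n → ℕ, and let the agent-2 jobs have processing times p₂ : Fin k → ℕ, due dates d₂ : Fin k → ℕ, and weights w₂ : Fin k → ℕ; let A₁, A₂ : ℕ. If there exists a schedule σ with at most A₁ tardy agent-1 jobs and ∑ over tardy agent-2 jobs j of w₂ j ≤ A₂, then there exists a schedule σ' with at most A₁ tardy agent-1 jobs and total weight of tardy agent-2 jobs at most A₂ in which additionally: (i) every early job (of either agent) is scheduled before every tardy job (of either agent); and (ii) for all early jobs i, i' (of either agent), if i is scheduled before i' under σ' then the due date of i is at most the due date of i'. -/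
namespace Schedule

variable {ι : Type*} [Fintype ι]

theorem exists_equiv_fin_monotone {α : Type*} [LinearOrder α] (f : ι → α) :
    ∃ τ : ι ≃ Fin (Fintype.card ι), Monotone (f ∘ τ.symm) := by
  classical
  let e := Fintype.equivFin ι
  exact ⟨e.trans (Tuple.sort (f ∘ e.symm)).symm, Tuple.monotone_sort (f ∘ e.symm)⟩

theorem exists_equiv_fin_compl_first_sorted (T : Finset ι) (d : ι → ℕ) :
    ∃ τ : ι ≃ Fin (Fintype.card ι),
      (∀ i ∉ T, ∀ j ∈ T, τ i < τ j) ∧ (∀ i ∉ T, ∀ j ∉ T, τ i < τ j → d i ≤ d j) := by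
  classical
  let key : ι → WithTop ℕ := fun i => if i ∈ T then ⊤ else d i
  obtain ⟨τ, hτ⟩ := exists_equiv_fin_monotone key
  have key_le {i j : ι} (hij : τ i < τ j) : key i ≤ key j := by
    simpa using hτ hij.le
  refine ⟨τ, fun i hi j hj => ?_, fun i hi j hj hij => ?_⟩
  · refine lt_of_le_of_ne (not_lt.mp fun hji => ?_) fun hij => hi (τ.injective hij ▸ hj)
    simpa [key, hi, hj] using key_le hji
  · simpa [key, hi, hj] using key_le hij

theorem completionTime_le_of_forall_le (p : ι → ℕ) {σ τ : ι ≃ Fin (Fintype.card ι)} {i : ι}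
    {c : ℕ} (h : ∀ j, τ j ≤ τ i → completionTime p σ j ≤ c) : completionTime p τ i ≤ c := by
  let pre := Finset.univ.filter fun j => τ j ≤ τ i
  obtain ⟨m, hm, hmax⟩ := pre.exists_max_image σ ⟨i, by simp [pre]⟩
  calc completionTime p τ i
      ≤ completionTime p σ m :=
        Finset.sum_le_sum_of_subset fun j hj => by simpa using hmax j hj
    _ ≤ c := h m (by simpa [pre] using hm)

variable (p d : ι → ℕ)

def tardyJobs (σ : ι ≃ Fin (Fintype.card ι)) : Finset ι :=
  Finset.univ.filter fun i => d i < completionTime p σ i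

variable {p d}

theorem mem_tardyJobs {σ : ι ≃ Fin (Fintype.card ι)} {i : ι} :
    i ∈ tardyJobs p d σ ↔ d i < completionTime p σ i := by
  simp [tardyJobs]

theorem notMem_tardyJobs {σ : ι ≃ Fin (Fintype.card ι)} {i : ι} :
    i ∉ tardyJobs p d σ ↔ completionTime p σ i ≤ d i := by
  simp [tardyJobs]

theorem tardyJobs_subset_of_early_first_edd {σ τ : ι ≃ Fin (Fintype.card ι)}
    (hfirst : ∀ i ∉ tardyJobs p d σ, ∀ j ∈ tardyJobs p d σ, τ i < τ j)
    (hedd : ∀ i ∉ tardyJobs p d σ, ∀ j ∉ tardyJobs p d σ, τ i < τ j → d i ≤ d j) :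
    tardyJobs p d τ ⊆ tardyJobs p d σ := by
  intro i
  contrapose
  intro hi
  refine notMem_tardyJobs.mpr (completionTime_le_of_forall_le p (σ := σ) fun j hji => ?_)
  have hj : j ∉ tardyJobs p d σ := fun hj => absurd hji (not_le.mpr (hfirst i hi j hj))
  calc completionTime p σ j ≤ d j := notMem_tardyJobs.mp hj
    _ ≤ d i := by
      rcases hji.lt_or_eq with hlt | heq
      · exact hedd j hj i hi hlt
      · rw [τ.injective heq]

theorem exists_tardyJobs_subset_early_first_edd (σ : ι ≃ Fin (Fintype.card ι)) :
    ∃ τ : ι ≃ Fin (Fintype.card ι), tardyJobs p d τ ⊆ tardyJobs p d σ ∧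
      (∀ i j, completionTime p τ i ≤ d i → d j < completionTime p τ j → τ i < τ j) ∧
      (∀ i j, completionTime p τ i ≤ d i → completionTime p τ j ≤ d j →
        τ i < τ j → d i ≤ d j) := by
  obtain ⟨T, hTσ, hmin⟩ :=
    exists_minimal_le_of_wellFoundedLT (· ∈ Set.range (tardyJobs p d)) _ ⟨σ, rfl⟩
  obtain ⟨σ₀, rfl⟩ := hmin.prop
  obtain ⟨τ, hfirst, hedd⟩ := exists_equiv_fin_compl_first_sorted (tardyJobs p d σ₀) d
  have hsub := tardyJobs_subset_of_early_first_edd hfirst hedd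
  have heq : tardyJobs p d τ = tardyJobs p d σ₀ := hmin.eq_of_le ⟨τ, rfl⟩ hsub
  rw [← heq] at hfirst hedd
  exact ⟨τ, hsub.trans hTσ,
    fun i j hi hj => hfirst i (notMem_tardyJobs.mpr hi) j (mem_tardyJobs.mpr hj),
    fun i j hi hj => hedd i (notMem_tardyJobs.mpr hi) j (notMem_tardyJobs.mpr hj)⟩

end Schedule

open Schedule in
/-- Lemma 8 (structural lemma) for
`1 | ∑ U_j^{(1)} ≤ A₁, ∑ w_j^{(2)} U_j^{(2)} ≤ A₂ |`:
if a schedule with at most `A₁` tardy agent-1 jobs and total weight of tardy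
agent-2 jobs at most `A₂` exists, then one exists in which additionally
(i) every early job precedes every tardy job, and (ii) the early jobs of both
agents follow the EDD rule. -/
theorem structural_lemma_sumU_weightedU
    (n k : ℕ) (p₁ d₁ : Fin n → ℕ) (p₂ d₂ w₂ : Fin k → ℕ) (A₁ A₂ : ℕ)
    (h : ∃ σ : (Fin n ⊕ Fin k) ≃ Fin (Fintype.card (Fin n ⊕ Fin k)),
      (Finset.univ.filter
        (fun i : Fin n => d₁ i < completionTime (Sum.elim p₁ p₂) σ (Sum.inl i))).card
          ≤ A₁ ∧
      (∑ j ∈ Finset.univ.filter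
          (fun j : Fin k => d₂ j < completionTime (Sum.elim p₁ p₂) σ (Sum.inr j)),
        w₂ j) ≤ A₂) :
    ∃ σ' : (Fin n ⊕ Fin k) ≃ Fin (Fintype.card (Fin n ⊕ Fin k)),
      (Finset.univ.filter
        (fun i : Fin n => d₁ i < completionTime (Sum.elim p₁ p₂) σ' (Sum.inl i))).card
          ≤ A₁ ∧
      ((∑ j ∈ Finset.univ.filter
          (fun j : Fin k => d₂ j < completionTime (Sum.elim p₁ p₂) σ' (Sum.inr j)),
        w₂ j) ≤ A₂) ∧
      -- (i) every early job precedes every tardy job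
      (∀ i i' : Fin n ⊕ Fin k,
        completionTime (Sum.elim p₁ p₂) σ' i ≤ Sum.elim d₁ d₂ i →
        Sum.elim d₁ d₂ i' < completionTime (Sum.elim p₁ p₂) σ' i' →
        σ' i < σ' i') ∧
      -- (ii) early jobs follow the EDD rule
      (∀ i i' : Fin n ⊕ Fin k,
        completionTime (Sum.elim p₁ p₂) σ' i ≤ Sum.elim d₁ d₂ i →
        completionTime (Sum.elim p₁ p₂) σ' i' ≤ Sum.elim d₁ d₂ i' →
        σ' i < σ' i' → Sum.elim d₁ d₂ i ≤ Sum.elim d₁ d₂ i') := by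
  obtain ⟨σ, hA₁, hA₂⟩ := h
  obtain ⟨σ', hsub, hfirst, hedd⟩ :=
    exists_tardyJobs_subset_early_first_edd (p := Sum.elim p₁ p₂) (d := Sum.elim d₁ d₂) σ
  have tardy_of_tardy (i) (hi : Sum.elim d₁ d₂ i < completionTime (Sum.elim p₁ p₂) σ' i) :
      Sum.elim d₁ d₂ i < completionTime (Sum.elim p₁ p₂) σ i :=
    mem_tardyJobs.mp (hsub (mem_tardyJobs.mpr hi))
  refine ⟨σ', ?_, ?_, hfirst, hedd⟩
  · refine le_trans (Finset.card_le_card fun i hi => ?_) hA₁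
    simpa using tardy_of_tardy (Sum.inl i) (by simpa using hi)
  · refine le_trans (Finset.sum_le_sum_of_subset fun j hj => ?_) hA₂
    simpa using tardy_of_tardy (Sum.inr j) (by simpa using hj)
end

section
/- Let the agent-1 jobs have positive processing times p₁ : Fin n → ℕ and due dates d₁ : Fin n → ℕ, and let the agent-2 jobs have positive processing times p₂ : Fin k → ℕ and weights w₂ : Fin k → ℕ; let A₁, A₂ : ℕ. Then: (i) in any timed schedule, if agent-1 jobs i and i' are both just-in-time and C (inl i) < C (inl i'), then d₁ i < d₁ i'; and (ii) if there exists a timed schedule with at least A₁ just-in-time agent-1 jobs and ∑ j, w₂ j · C (inr j) ≤ A₂, then there exists a timed schedule with exactly A₁ just-in-time agent-1 jobs and ∑ j, w₂ j · C (inr j) ≤ A₂ in which every agent-1 job that is not just-in-time starts after the completion time of every just-in-time agent-1 job and of every agent-2 job. -/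
/-- A timed schedule: a start-time function whose half-open execution intervals
`(s i, s i + p i]` are pairwise disjoint. -/
def IsTimedSchedule {ι : Type*} (p : ι → ℕ) (s : ι → ℕ) : Prop :=
  ∀ i j, i ≠ j →
    Disjoint (Set.Ioc (s i) (s i + p i)) (Set.Ioc (s j) (s j + p j))

/-!
Part (i) is immediate: the completion times of just-in-time jobs are their due dates.
For (ii), keep `A₁` of the just-in-time agent-1 jobs and all agent-2 jobs in place, and
move every other agent-1 job, one after another, past both the makespan and the largest due
date. The moved jobs become late, the kept ones stay just in time, and no agent-2 completion
time changes.
-/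

open Finset Function

namespace IsTimedSchedule

variable {ι : Type*} {p : ι → ℕ}

theorem of_injective_rank {α : Type*} [LinearOrder α] {e : ι → α} (he : Injective e)
    {s : ι → ℕ} (h : ∀ i j, e i < e j → s i + p i ≤ s j) : IsTimedSchedule p s := by
  intro i j hij
  rcases lt_or_gt_of_ne (he.ne hij) with hlt | hlt
  · exact Set.Ioc_disjoint_Ioc_of_le (h i j hlt)
  · exact (Set.Ioc_disjoint_Ioc_of_le (h j i hlt)).symm

theorem sequential [Fintype ι] {α : Type*} [LinearOrder α] {e : ι → α} (he : Injective e)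
    (T : ℕ) : IsTimedSchedule p (fun i ↦ T + ∑ j with e j < e i, p j) := by
  classical
  refine of_injective_rank he fun i j hij ↦ ?_
  have hsub : insert i ({l | e l < e i} : Finset ι) ⊆ ({l | e l < e j} : Finset ι) := by
    intro l hl
    simp only [mem_insert, mem_filter_univ] at hl ⊢
    rcases hl with rfl | hl
    exacts [hij, hl.trans hij]
  have hsum := sum_le_sum_of_subset (f := p) hsub
  rw [sum_insert (by simp)] at hsum
  omega

theorem piecewise {s t : ι → ℕ} (hs : IsTimedSchedule p s) (ht : IsTimedSchedule p t)
    (M : Set ι) [DecidablePred (· ∈ M)] (hsep : ∀ i ∉ M, ∀ j ∈ M, s i + p i ≤ t j) :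
    IsTimedSchedule p (M.piecewise t s) := by
  intro i j hij
  by_cases hi : i ∈ M <;> by_cases hj : j ∈ M <;>
    simp only [Set.piecewise_eq_of_mem, Set.piecewise_eq_of_notMem, hi, hj, not_false_eq_true]
  · exact ht i j hij
  · exact (Set.Ioc_disjoint_Ioc_of_le (hsep j hj i hi)).symm
  · exact Set.Ioc_disjoint_Ioc_of_le (hsep i hi j hj)
  · exact hs i j hij

theorem exists_postpone [Fintype ι] {s : ι → ℕ} (hs : IsTimedSchedule p s) (M : Set ι)
    (T₀ : ℕ) : ∃ s', IsTimedSchedule p s' ∧ (∀ i ∉ M, s' i = s i) ∧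
      ∀ j ∈ M, T₀ ≤ s' j ∧ ∀ i ∉ M, s i + p i ≤ s' j := by
  classical
  obtain ⟨T, hT⟩ := (Set.finite_range fun i ↦ s i + p i).bddAbove
  let t i := T + T₀ + ∑ l with Fintype.equivFin ι l < Fintype.equivFin ι i, p l
  have hT₀ : ∀ j, T + T₀ ≤ t j := fun j ↦ Nat.le_add_right _ _
  have hst : ∀ i j, s i + p i ≤ t j := fun i j ↦
    (hT (Set.mem_range_self i)).trans (by grind)
  refine ⟨M.piecewise t s, ?_, fun i hi ↦ M.piecewise_eq_of_notMem _ _ hi, fun j hj ↦ ?_⟩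
  · exact hs.piecewise (sequential (Fintype.equivFin ι).injective _) M fun i _ j _ ↦ hst i j
  · rw [M.piecewise_eq_of_mem _ _ hj]
    exact ⟨by grind, fun i _ ↦ hst i j⟩

end IsTimedSchedule

theorem jit_structural_lemma_general
    (n k : ℕ) (p₁ d₁ : Fin n → ℕ) (p₂ w₂ : Fin k → ℕ)
    (A₁ A₂ : ℕ) :
    -- (i)
    (∀ s : Fin n ⊕ Fin k → ℕ, IsTimedSchedule (Sum.elim p₁ p₂) s →
      ∀ i i' : Fin n,
        s (Sum.inl i) + p₁ i = d₁ i → s (Sum.inl i') + p₁ i' = d₁ i' →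
        s (Sum.inl i) + p₁ i < s (Sum.inl i') + p₁ i' → d₁ i < d₁ i') ∧
    -- (ii)
    ((∃ s : Fin n ⊕ Fin k → ℕ, IsTimedSchedule (Sum.elim p₁ p₂) s ∧
        A₁ ≤ (Finset.univ.filter
          (fun i : Fin n => s (Sum.inl i) + p₁ i = d₁ i)).card ∧
        (∑ j, w₂ j * (s (Sum.inr j) + p₂ j)) ≤ A₂) →
      ∃ s : Fin n ⊕ Fin k → ℕ, IsTimedSchedule (Sum.elim p₁ p₂) s ∧
        (Finset.univ.filter
          (fun i : Fin n => s (Sum.inl i) + p₁ i = d₁ i)).card = A₁ ∧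
        (∑ j, w₂ j * (s (Sum.inr j) + p₂ j)) ≤ A₂ ∧
        (∀ i : Fin n, s (Sum.inl i) + p₁ i ≠ d₁ i →
          (∀ i' : Fin n, s (Sum.inl i') + p₁ i' = d₁ i' →
            s (Sum.inl i') + p₁ i' ≤ s (Sum.inl i)) ∧
          (∀ j : Fin k, s (Sum.inr j) + p₂ j ≤ s (Sum.inl i)))) := by
  refine ⟨fun s _ i i' hi hi' hlt ↦ hi ▸ hi' ▸ hlt, ?_⟩
  rintro ⟨s, hs, hA₁, hA₂⟩
  obtain ⟨S, hSjit, rfl⟩ := exists_subset_card_eq hA₁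
  -- Postponed jobs start after every due date, so they are late.
  obtain ⟨s', hs', hkeep, hlate⟩ :=
    hs.exists_postpone (Sum.inl '' (↑S)ᶜ) (univ.sup d₁ + 1)
  have hkeepS : ∀ i ∈ S, s' (.inl i) = s (.inl i) := fun i hi ↦ hkeep _ (by simpa using hi)
  have hlateS : ∀ i ∉ S, d₁ i < s' (.inl i) := fun i hi ↦
    (Nat.lt_succ_of_le (le_sup (mem_univ i))).trans_le (hlate _ ⟨i, hi, rfl⟩).1
  have hjit : ∀ i, s' (.inl i) + p₁ i = d₁ i ↔ i ∈ S := fun i ↦ by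
    by_cases hi : i ∈ S
    · simpa [hi, hkeepS i hi] using (mem_filter.1 (hSjit hi)).2
    · simpa [hi] using (hlateS i hi).trans_le (Nat.le_add_right _ _) |>.ne'
  refine ⟨s', hs', by simp only [hjit, filter_mem_eq_inter, univ_inter], ?_, fun i hi ↦ ?_⟩
  · simpa only [hkeep (.inr _) (by simp)] using hA₂
  · have hlatei := (hlate (.inl i) ⟨i, mt (hjit i).2 hi, rfl⟩).2
    refine ⟨fun i' hi' ↦ ?_, fun j ↦ ?_⟩
    · simpa [hkeepS i' ((hjit i').1 hi')] using hlatei (.inl i') (by simpa using (hjit i').1 hi')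
    · simpa [hkeep (.inr j) (by simp)] using hlatei (.inr j) (by simp)

/-- Lemma 9 (auxiliary JIT lemma) for
`1 | ∑ E_j^{(1)} ≥ A₁, ∑ w_j^{(2)} C_j^{(2)} ≤ A₂ |`:
(i) in any timed schedule, just-in-time agent-1 jobs complete in increasing
due-date order; (ii) if a timed schedule with at least `A₁` just-in-time
agent-1 jobs and agent-2 weighted total completion time at most `A₂` exists,
then one exists with exactly `A₁` just-in-time agent-1 jobs in which every
non-just-in-time agent-1 job starts after the completion of every just-in-time
agent-1 job and of every agent-2 job. -/
theorem jit_structural_lemma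
    (n k : ℕ) (p₁ d₁ : Fin n → ℕ) (p₂ w₂ : Fin k → ℕ)
    (hp₁ : ∀ i, 0 < p₁ i) (hp₂ : ∀ j, 0 < p₂ j) (A₁ A₂ : ℕ) :
    -- (i)
    (∀ s : Fin n ⊕ Fin k → ℕ, IsTimedSchedule (Sum.elim p₁ p₂) s →
      ∀ i i' : Fin n,
        s (Sum.inl i) + p₁ i = d₁ i → s (Sum.inl i') + p₁ i' = d₁ i' →
        s (Sum.inl i) + p₁ i < s (Sum.inl i') + p₁ i' → d₁ i < d₁ i') ∧
    -- (ii)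
    ((∃ s : Fin n ⊕ Fin k → ℕ, IsTimedSchedule (Sum.elim p₁ p₂) s ∧
        A₁ ≤ (Finset.univ.filter
          (fun i : Fin n => s (Sum.inl i) + p₁ i = d₁ i)).card ∧
        (∑ j, w₂ j * (s (Sum.inr j) + p₂ j)) ≤ A₂) →
      ∃ s : Fin n ⊕ Fin k → ℕ, IsTimedSchedule (Sum.elim p₁ p₂) s ∧
        (Finset.univ.filter
          (fun i : Fin n => s (Sum.inl i) + p₁ i = d₁ i)).card = A₁ ∧
        (∑ j, w₂ j * (s (Sum.inr j) + p₂ j)) ≤ A₂ ∧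
        (∀ i : Fin n, s (Sum.inl i) + p₁ i ≠ d₁ i →
          (∀ i' : Fin n, s (Sum.inl i') + p₁ i' = d₁ i' →
            s (Sum.inl i') + p₁ i' ≤ s (Sum.inl i)) ∧
          (∀ j : Fin k, s (Sum.inr j) + p₂ j ≤ s (Sum.inl i)))) :=
  jit_structural_lemma_general n k p₁ d₁ p₂ w₂ A₁ A₂
end

section
/- Let the agent-1 jobs have positive processing times p₁ : Fin n → ℕ and due dates d₁ : Fin n → ℕ, and let the agent-2 jobs have positive processing times p₂ : Fin k → ℕ and weights w₂ : Fin k → ℕ; let A₁, A₂, ℓ : ℕ with ℓ ≤ k, let a, b be agent-1 jobs with d₁ a ≤ d₁ b − p₁ b, and let K be the largest t ≤ k − ℓ such that ∑_{j=ℓ+1}^{ℓ+t} p₂ j ≤ d₁ b − p₁ b − d₁ a. Suppose there exists a timed schedule with at least A₁ just-in-time agent-1 jobs and ∑ j, w₂ j · C (inr j) ≤ A₂, in which the agent-2 jobs are executed in index order, jobs a and b are both just-in-time, no agent-1 job is executed during the interval (d₁ a, d₁ b − p₁ b], and exactly ℓ agent-2 jobs complete no later than the start time d₁ a − p₁ a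 of job a. Then there exists a timed schedule with all of these properties in which additionally agent-2 job j starts at time d₁ a + ∑_{i=ℓ+1}^{j−1} p₂ i for every j with ℓ+1 ≤ j ≤ ℓ+K, and no job is executed during the interval (d₁ a + ∑_{j=ℓ+1}^{ℓ+K} p₂ j, d₁ b − p₁ b]. -/
/-- `prefixSum k p₂ ℓ t` is the total processing time of the `t` agent-2 jobs
with (0-based) indices `ℓ, ℓ+1, …, ℓ+t-1`, i.e. the 1-indexed jobs
`ℓ+1, …, ℓ+t`. -/
def prefixSum (k : ℕ) (p₂ : Fin k → ℕ) (ℓ t : ℕ) : ℕ :=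
  ∑ j ∈ Finset.univ.filter (fun j : Fin k => ℓ ≤ (j : ℕ) ∧ (j : ℕ) < ℓ + t), p₂ j

/-- The collection of properties assumed of the timed schedule in Lemma 10:
it is a feasible timed schedule (at least `A₁` just-in-time agent-1 jobs, and
agent-2 weighted total completion time at most `A₂`), the agent-2 jobs are
executed in index order, the agent-1 jobs `a` and `b` are both just-in-time,
no agent-1 job is executed during the interval `(d₁ a, d₁ b - p₁ b]`, and
exactly `ℓ` agent-2 jobs complete no later than `d₁ a - p₁ a` (the start time
of job `a`). -/
def Lemma10Hyp (n k : ℕ) (p₁ d₁ : Fin n → ℕ) (p₂ w₂ : Fin k → ℕ)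
    (A₁ A₂ ℓ : ℕ) (a b : Fin n) (s : Fin n ⊕ Fin k → ℕ) : Prop :=
  IsTimedSchedule (Sum.elim p₁ p₂) s ∧
  A₁ ≤ (Finset.univ.filter
    (fun i : Fin n => s (Sum.inl i) + p₁ i = d₁ i)).card ∧
  (∑ j, w₂ j * (s (Sum.inr j) + p₂ j)) ≤ A₂ ∧
  (∀ j j' : Fin k, j < j' → s (Sum.inr j) + p₂ j ≤ s (Sum.inr j')) ∧
  s (Sum.inl a) + p₁ a = d₁ a ∧
  s (Sum.inl b) + p₁ b = d₁ b ∧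
  (∀ i : Fin n,
    Disjoint (Set.Ioc (s (Sum.inl i)) (s (Sum.inl i) + p₁ i))
      (Set.Ioc (d₁ a) (d₁ b - p₁ b))) ∧
  (Finset.univ.filter
    (fun j : Fin k => s (Sum.inr j) + p₂ j ≤ d₁ a - p₁ a)).card = ℓ

/-!
The agent-2 jobs run in index order, so the `ℓ` of them that complete before `a` starts are
those of (0-based) index `< ℓ`, and every later one starts after `a` completes. Hence jobs
`ℓ, …, j` all run inside `(d₁ a, C j]`, and packing jobs `ℓ, …, ℓ + K - 1` back to back from
`d₁ a` completes each of them no later than before. A job of index `≥ ℓ + K` completing by the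
time `b` starts would, by the same packing bound, contradict the maximality of `K`; so it starts
after `b` completes, and the window between the packed block and `b` stays idle.
-/

open Finset

lemma isTimedSchedule_sumElim_iff {α β : Type*} {p : α → ℕ} {q : β → ℕ} {s : α ⊕ β → ℕ} :
    IsTimedSchedule (Sum.elim p q) s ↔
      IsTimedSchedule p (s ∘ Sum.inl) ∧ IsTimedSchedule q (s ∘ Sum.inr) ∧
        ∀ i j, Disjoint (Set.Ioc (s (.inl i)) (s (.inl i) + p i))
          (Set.Ioc (s (.inr j)) (s (.inr j) + q j)) := by
  constructor
  · intro hs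
    exact ⟨fun i j hij => hs _ _ (Sum.inl_injective.ne hij),
      fun i j hij => hs _ _ (Sum.inr_injective.ne hij), fun i j => hs _ _ Sum.inl_ne_inr⟩
  · rintro ⟨hl, hr, hlr⟩ (i | i) (j | j) hij
    · exact hl i j (fun h => hij (congrArg _ h))
    · exact hlr i j
    · exact (hlr j i).symm
    · exact hr i j (fun h => hij (congrArg _ h))

section TimedSchedule

variable {ι : Type*} {p s : ι → ℕ}

lemma isTimedSchedule_of_completion_le_start [LinearOrder ι]
    (h : ∀ i j, i < j → s i + p i ≤ s j) : IsTimedSchedule p s := by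
  intro i j hij
  rcases hij.lt_or_gt with hlt | hlt
  · exact Set.Ioc_disjoint_Ioc_of_le (h i j hlt)
  · exact (Set.Ioc_disjoint_Ioc_of_le (h j i hlt)).symm

lemma IsTimedSchedule.completion_le_or_completion_le (hs : IsTimedSchedule p s) {i j : ι}
    (hij : i ≠ j) (hi : 0 < p i) (hj : 0 < p j) : s i + p i ≤ s j ∨ s j + p j ≤ s i := by
  have := Set.Ioc_disjoint_Ioc.mp (hs i j hij)
  omega

lemma IsTimedSchedule.sum_le_sub_of_within (hs : IsTimedSchedule p s) (B : Finset ι) {L R : ℕ}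
    (hB : ∀ i ∈ B, L ≤ s i ∧ s i + p i ≤ R) : ∑ i ∈ B, p i ≤ R - L := by
  classical
  calc ∑ i ∈ B, p i = #(B.biUnion fun i => Ioc (s i) (s i + p i)) := by
        rw [card_biUnion]
        · simp
        · intro i _ j _ hij
          rw [Function.onFun, ← disjoint_coe, coe_Ioc, coe_Ioc]
          exact hs i j hij
    _ ≤ #(Ioc L R) := card_le_card <| biUnion_subset.2 fun i hi =>
        Ioc_subset_Ioc (hB i hi).1 (hB i hi).2
    _ = R - L := Nat.card_Ioc L R

end TimedSchedule

lemma Monotone.le_iff_lt_card_filter_le {α : Type*} [LinearOrder α] {k : ℕ} {f : Fin k → α}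
    (hf : Monotone f) (T : α) (j : Fin k) : f j ≤ T ↔ (j : ℕ) < #{i | f i ≤ T} := by
  constructor
  · intro hj
    calc (j : ℕ) < #(Iic j) := by simp
      _ ≤ #{i | f i ≤ T} := card_le_card fun i hi =>
          mem_filter.2 ⟨mem_univ _, (hf (mem_Iic.1 hi)).trans hj⟩
  · intro hj
    by_contra hT
    have : #{i | f i ≤ T} ≤ #(Iio j) := card_le_card fun i hi =>
      mem_Iio.2 <| lt_of_not_ge fun hji => hT ((hf hji).trans (mem_filter.1 hi).2)
    simp only [Fin.card_Iio] at this
    omega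

section PrefixSum

variable {k : ℕ} (p₂ : Fin k → ℕ) (ℓ : ℕ)

lemma prefixSum_mono : Monotone (prefixSum k p₂ ℓ) := fun _ _ h =>
  sum_le_sum_of_subset fun j hj => by
    simp only [mem_filter, mem_univ, true_and] at hj ⊢
    omega

lemma prefixSum_succ {t : ℕ} {j : Fin k} (hj : (j : ℕ) = ℓ + t) :
    prefixSum k p₂ ℓ (t + 1) = prefixSum k p₂ ℓ t + p₂ j := by
  have hset : univ.filter (fun i : Fin k => ℓ ≤ (i : ℕ) ∧ (i : ℕ) < ℓ + (t + 1))
      = insert j (univ.filter fun i : Fin k => ℓ ≤ (i : ℕ) ∧ (i : ℕ) < ℓ + t) := by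
    ext i
    simp only [mem_insert, mem_filter, mem_univ, true_and, Fin.ext_iff]
    omega
  unfold prefixSum
  rw [hset, sum_insert (by simp [hj]), add_comm]

end PrefixSum

def packBlock {n k : ℕ} (p₂ : Fin k → ℕ) (ℓ K t₀ : ℕ) (s : Fin n ⊕ Fin k → ℕ) :
    Fin n ⊕ Fin k → ℕ :=
  Sum.elim (s ∘ Sum.inl) fun j =>
    if ℓ ≤ (j : ℕ) ∧ (j : ℕ) < ℓ + K then t₀ + prefixSum k p₂ ℓ ((j : ℕ) - ℓ) else s (.inr j)

section PackBlock

variable {n k : ℕ} {p₂ : Fin k → ℕ} {ℓ K t₀ : ℕ} {s : Fin n ⊕ Fin k → ℕ}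

@[simp]
lemma packBlock_inl (i : Fin n) : packBlock p₂ ℓ K t₀ s (.inl i) = s (.inl i) := rfl

lemma packBlock_inr_of_mem {j : Fin k} (h₁ : ℓ ≤ (j : ℕ)) (h₂ : (j : ℕ) < ℓ + K) :
    packBlock p₂ ℓ K t₀ s (.inr j) = t₀ + prefixSum k p₂ ℓ ((j : ℕ) - ℓ) :=
  if_pos ⟨h₁, h₂⟩

lemma packBlock_inr_of_not_mem {j : Fin k} (h : ¬ (ℓ ≤ (j : ℕ) ∧ (j : ℕ) < ℓ + K)) :
    packBlock p₂ ℓ K t₀ s (.inr j) = s (.inr j) :=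
  if_neg h

lemma completion_packBlock_of_mem {j : Fin k} (h₁ : ℓ ≤ (j : ℕ)) (h₂ : (j : ℕ) < ℓ + K) :
    packBlock p₂ ℓ K t₀ s (.inr j) + p₂ j = t₀ + prefixSum k p₂ ℓ ((j : ℕ) - ℓ + 1) := by
  rw [packBlock_inr_of_mem h₁ h₂, prefixSum_succ p₂ ℓ (j := j) (by omega), add_assoc]

lemma completion_packBlock_le {j : Fin k} (h₁ : ℓ ≤ (j : ℕ)) (h₂ : (j : ℕ) < ℓ + K) :
    packBlock p₂ ℓ K t₀ s (.inr j) + p₂ j ≤ t₀ + prefixSum k p₂ ℓ K := by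
  rw [completion_packBlock_of_mem h₁ h₂]
  exact Nat.add_le_add_left (prefixSum_mono p₂ ℓ (by omega)) t₀

lemma completion_packBlock_le_start_of_mem {j j' : Fin k} (h₁ : ℓ ≤ (j : ℕ)) (h : j < j')
    (h₂ : (j' : ℕ) < ℓ + K) :
    packBlock p₂ ℓ K t₀ s (.inr j) + p₂ j ≤ packBlock p₂ ℓ K t₀ s (.inr j') := by
  have : (j : ℕ) < j' := h
  rw [completion_packBlock_of_mem h₁ (by omega), packBlock_inr_of_mem (by omega) h₂]
  exact Nat.add_le_add_left (prefixSum_mono p₂ ℓ (by omega)) t₀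

end PackBlock

namespace Lemma10Hyp

variable {n k : ℕ} {p₁ d₁ : Fin n → ℕ} {p₂ w₂ : Fin k → ℕ} {A₁ A₂ ℓ K : ℕ} {a b : Fin n}
  {s : Fin n ⊕ Fin k → ℕ}

lemma monotone_completion (hs : Lemma10Hyp n k p₁ d₁ p₂ w₂ A₁ A₂ ℓ a b s) :
    Monotone fun j => s (.inr j) + p₂ j :=
  have ⟨_, _, _, hord, _⟩ := hs
  monotone_iff_forall_lt.2 fun j j' h => (hord j j' h).trans (Nat.le_add_right _ _)

lemma completion_le_start_iff (hs : Lemma10Hyp n k p₁ d₁ p₂ w₂ A₁ A₂ ℓ a b s) (j : Fin k) :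
    s (.inr j) + p₂ j ≤ d₁ a - p₁ a ↔ (j : ℕ) < ℓ := by
  have ⟨_, _, _, _, _, _, _, hcard⟩ := hs
  rw [hs.monotone_completion.le_iff_lt_card_filter_le, ← hcard]

lemma due_le_start_of_le (hs : Lemma10Hyp n k p₁ d₁ p₂ w₂ A₁ A₂ ℓ a b s) (hpa : 0 < p₁ a)
    {j : Fin k} (hpj : 0 < p₂ j) (hj : ℓ ≤ (j : ℕ)) : d₁ a ≤ s (.inr j) := by
  have ⟨hsched, _, _, _, hja, _⟩ := hs
  have hlate := (hs.completion_le_start_iff j).not.2 (by omega)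
  have := hsched.completion_le_or_completion_le (i := .inr j) (j := .inl a) Sum.inr_ne_inl hpj hpa
  dsimp only [Sum.elim_inl, Sum.elim_inr] at this
  omega

lemma prefixSum_le_completion (hs : Lemma10Hyp n k p₁ d₁ p₂ w₂ A₁ A₂ ℓ a b s)
    (hpa : 0 < p₁ a) (hp₂ : ∀ j, 0 < p₂ j) {j : Fin k} (hj : ℓ ≤ (j : ℕ)) :
    d₁ a + prefixSum k p₂ ℓ ((j : ℕ) - ℓ + 1) ≤ s (.inr j) + p₂ j := by
  have ⟨hsched, _⟩ := hs
  have hpack := (isTimedSchedule_sumElim_iff.1 hsched).2.1.sum_le_sub_of_within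
    (univ.filter fun i : Fin k => ℓ ≤ (i : ℕ) ∧ (i : ℕ) < ℓ + ((j : ℕ) - ℓ + 1))
    (L := d₁ a) (R := s (.inr j) + p₂ j) fun i hi => by
      simp only [mem_filter, mem_univ, true_and] at hi
      exact ⟨hs.due_le_start_of_le hpa (hp₂ i) hi.1,
        hs.monotone_completion (show i ≤ j from Fin.le_def.2 (by omega))⟩
  have := hs.due_le_start_of_le hpa (hp₂ j) hj
  have := hp₂ j
  unfold prefixSum
  omega

lemma due_le_start_of_add_le (hs : Lemma10Hyp n k p₁ d₁ p₂ w₂ A₁ A₂ ℓ a b s)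
    (hpa : 0 < p₁ a) (hpb : 0 < p₁ b) (hp₂ : ∀ j, 0 < p₂ j)
    (hK : ∀ t, t ≤ k - ℓ → prefixSum k p₂ ℓ t ≤ d₁ b - p₁ b - d₁ a → t ≤ K)
    {j : Fin k} (hj : ℓ + K ≤ (j : ℕ)) : d₁ b ≤ s (.inr j) := by
  have ⟨hsched, _, _, _, _, hjb, _⟩ := hs
  have hpack := hs.prefixSum_le_completion hpa hp₂ (j := j) (by omega)
  have hlate : ¬ s (.inr j) + p₂ j ≤ d₁ b - p₁ b := fun h => by
    have := hK ((j : ℕ) - ℓ + 1) (by omega) (by omega)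
    omega
  have := hsched.completion_le_or_completion_le (i := .inr j) (j := .inl b) Sum.inr_ne_inl
    (hp₂ j) hpb
  dsimp only [Sum.elim_inl, Sum.elim_inr] at this
  omega

lemma completion_packBlock_le_completion (hs : Lemma10Hyp n k p₁ d₁ p₂ w₂ A₁ A₂ ℓ a b s)
    (hpa : 0 < p₁ a) (hp₂ : ∀ j, 0 < p₂ j) (j : Fin k) :
    packBlock p₂ ℓ K (d₁ a) s (.inr j) + p₂ j ≤ s (.inr j) + p₂ j := by
  by_cases hj : ℓ ≤ (j : ℕ) ∧ (j : ℕ) < ℓ + K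
  · rw [completion_packBlock_of_mem hj.1 hj.2]
    exact hs.prefixSum_le_completion hpa hp₂ hj.1
  · rw [packBlock_inr_of_not_mem hj]

lemma completion_packBlock_le_start (hs : Lemma10Hyp n k p₁ d₁ p₂ w₂ A₁ A₂ ℓ a b s)
    (hpa : 0 < p₁ a) (hpb : 0 < p₁ b) (hp₂ : ∀ j, 0 < p₂ j)
    (hK : ∀ t, t ≤ k - ℓ → prefixSum k p₂ ℓ t ≤ d₁ b - p₁ b - d₁ a → t ≤ K)
    (hfit : d₁ a + prefixSum k p₂ ℓ K ≤ d₁ b - p₁ b) {j j' : Fin k} (h : j < j') :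
    packBlock p₂ ℓ K (d₁ a) s (.inr j) + p₂ j ≤ packBlock p₂ ℓ K (d₁ a) s (.inr j') := by
  have ⟨_, _, _, hord, _⟩ := hs
  have hlt : (j : ℕ) < j' := h
  by_cases hj : ℓ ≤ (j : ℕ) ∧ (j : ℕ) < ℓ + K <;> by_cases hj' : ℓ ≤ (j' : ℕ) ∧ (j' : ℕ) < ℓ + K
  · exact completion_packBlock_le_start_of_mem hj.1 h hj'.2
  · have hC : packBlock p₂ ℓ K (d₁ a) s (.inr j) + p₂ j ≤ d₁ a + prefixSum k p₂ ℓ K :=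
      completion_packBlock_le hj.1 hj.2
    have := hs.due_le_start_of_add_le hpa hpb hp₂ hK (j := j') (by omega)
    rw [packBlock_inr_of_not_mem hj']
    omega
  · have := (hs.completion_le_start_iff j).2 (by omega)
    rw [packBlock_inr_of_not_mem hj, packBlock_inr_of_mem hj'.1 hj'.2]
    omega
  · rw [packBlock_inr_of_not_mem hj, packBlock_inr_of_not_mem hj']
    exact hord j j' h

lemma isTimedSchedule_packBlock (hs : Lemma10Hyp n k p₁ d₁ p₂ w₂ A₁ A₂ ℓ a b s)
    (hpa : 0 < p₁ a) (hpb : 0 < p₁ b) (hp₂ : ∀ j, 0 < p₂ j)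
    (hK : ∀ t, t ≤ k - ℓ → prefixSum k p₂ ℓ t ≤ d₁ b - p₁ b - d₁ a → t ≤ K)
    (hfit : d₁ a + prefixSum k p₂ ℓ K ≤ d₁ b - p₁ b) :
    IsTimedSchedule (Sum.elim p₁ p₂) (packBlock p₂ ℓ K (d₁ a) s) := by
  have ⟨hsched, _, _, _, _, _, hgap, _⟩ := hs
  obtain ⟨hl, -, hlr⟩ := isTimedSchedule_sumElim_iff.1 hsched
  refine isTimedSchedule_sumElim_iff.2 ⟨hl, isTimedSchedule_of_completion_le_start
    fun j j' h => hs.completion_packBlock_le_start hpa hpb hp₂ hK hfit h, fun i j => ?_⟩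
  simp only [packBlock_inl]
  by_cases hj : ℓ ≤ (j : ℕ) ∧ (j : ℕ) < ℓ + K
  · have hC : packBlock p₂ ℓ K (d₁ a) s (.inr j) + p₂ j ≤ d₁ a + prefixSum k p₂ ℓ K :=
      completion_packBlock_le hj.1 hj.2
    refine (hgap i).mono_right (Set.Ioc_subset_Ioc ?_ (by omega))
    rw [packBlock_inr_of_mem hj.1 hj.2]
    exact Nat.le_add_right _ _
  · rw [packBlock_inr_of_not_mem hj]
    exact hlr i j

lemma packBlock_hyp (hs : Lemma10Hyp n k p₁ d₁ p₂ w₂ A₁ A₂ ℓ a b s)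
    (hpa : 0 < p₁ a) (hpb : 0 < p₁ b) (hp₂ : ∀ j, 0 < p₂ j)
    (hK : ∀ t, t ≤ k - ℓ → prefixSum k p₂ ℓ t ≤ d₁ b - p₁ b - d₁ a → t ≤ K)
    (hfit : d₁ a + prefixSum k p₂ ℓ K ≤ d₁ b - p₁ b) :
    Lemma10Hyp n k p₁ d₁ p₂ w₂ A₁ A₂ ℓ a b (packBlock p₂ ℓ K (d₁ a) s) := by
  have ⟨_, hA₁, hA₂, _, hja, hjb, hgap, hcard⟩ := hs
  refine ⟨hs.isTimedSchedule_packBlock hpa hpb hp₂ hK hfit, hA₁,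
    (sum_le_sum fun j _ => Nat.mul_le_mul_left _
      (hs.completion_packBlock_le_completion hpa hp₂ j)).trans hA₂,
    fun j j' h => hs.completion_packBlock_le_start hpa hpb hp₂ hK hfit h, hja, hjb, hgap, ?_⟩
  refine (congrArg card (filter_congr fun j _ => ?_)).trans hcard
  by_cases hj : ℓ ≤ (j : ℕ) ∧ (j : ℕ) < ℓ + K
  · have := (hs.completion_le_start_iff j).not.2 (by omega)
    rw [packBlock_inr_of_mem hj.1 hj.2]
    omega
  · rw [packBlock_inr_of_not_mem hj]

lemma disjoint_Ioc_packBlock (hs : Lemma10Hyp n k p₁ d₁ p₂ w₂ A₁ A₂ ℓ a b s)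
    (hpa : 0 < p₁ a) (hpb : 0 < p₁ b) (hp₂ : ∀ j, 0 < p₂ j)
    (hK : ∀ t, t ≤ k - ℓ → prefixSum k p₂ ℓ t ≤ d₁ b - p₁ b - d₁ a → t ≤ K)
    (i : Fin n ⊕ Fin k) :
    Disjoint (Set.Ioc (packBlock p₂ ℓ K (d₁ a) s i)
        (packBlock p₂ ℓ K (d₁ a) s i + Sum.elim p₁ p₂ i))
      (Set.Ioc (d₁ a + prefixSum k p₂ ℓ K) (d₁ b - p₁ b)) := by
  have ⟨_, _, _, _, _, _, hgap, _⟩ := hs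
  rcases i with i | j
  · exact (hgap i).mono_right (Set.Ioc_subset_Ioc_left (Nat.le_add_right _ _))
  · dsimp only [Sum.elim_inr]
    by_cases hj : ℓ ≤ (j : ℕ) ∧ (j : ℕ) < ℓ + K
    · exact Set.Ioc_disjoint_Ioc_of_le (completion_packBlock_le hj.1 hj.2)
    rw [packBlock_inr_of_not_mem hj]
    by_cases hjℓ : (j : ℕ) < ℓ
    · have := (hs.completion_le_start_iff j).2 hjℓ
      exact Set.Ioc_disjoint_Ioc_of_le (by omega)
    · have := hs.due_le_start_of_add_le hpa hpb hp₂ hK (j := j) (by omega)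
      exact (Set.Ioc_disjoint_Ioc_of_le (by omega)).symm

end Lemma10Hyp

theorem jit_consecutive_block_lemma_general
    (n k : ℕ) (p₁ d₁ : Fin n → ℕ) (p₂ w₂ : Fin k → ℕ)
    (hp₁ : ∀ i, 0 < p₁ i) (hp₂ : ∀ j, 0 < p₂ j)
    (A₁ A₂ ℓ : ℕ) (a b : Fin n)
    (hab : d₁ a ≤ d₁ b - p₁ b)
    (K : ℕ)
    (hK2 : prefixSum k p₂ ℓ K ≤ d₁ b - p₁ b - d₁ a)
    (hK3 : ∀ t, t ≤ k - ℓ → prefixSum k p₂ ℓ t ≤ d₁ b - p₁ b - d₁ a → t ≤ K)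
    (h : ∃ s : Fin n ⊕ Fin k → ℕ,
      Lemma10Hyp n k p₁ d₁ p₂ w₂ A₁ A₂ ℓ a b s) :
    ∃ s : Fin n ⊕ Fin k → ℕ,
      Lemma10Hyp n k p₁ d₁ p₂ w₂ A₁ A₂ ℓ a b s ∧
      (∀ j : Fin k, ℓ ≤ (j : ℕ) → (j : ℕ) < ℓ + K →
        s (Sum.inr j) = d₁ a + prefixSum k p₂ ℓ ((j : ℕ) - ℓ)) ∧
      (∀ i : Fin n ⊕ Fin k,
        Disjoint (Set.Ioc (s i) (s i + Sum.elim p₁ p₂ i))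
          (Set.Ioc (d₁ a + prefixSum k p₂ ℓ K) (d₁ b - p₁ b))) := by
  obtain ⟨s, hs⟩ := h
  have hfit : d₁ a + prefixSum k p₂ ℓ K ≤ d₁ b - p₁ b := by omega
  exact ⟨packBlock p₂ ℓ K (d₁ a) s, hs.packBlock_hyp (hp₁ a) (hp₁ b) hp₂ hK3 hfit,
    fun _ h₁ h₂ => packBlock_inr_of_mem h₁ h₂, hs.disjoint_Ioc_packBlock (hp₁ a) (hp₁ b) hp₂ hK3⟩

/-- Lemma 10 for `1 | ∑ E_j^{(1)} ≥ A₁, ∑ w_j^{(2)} C_j^{(2)} ≤ A₂ |`: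
if a feasible timed schedule exists in which `a` and `b` are two just-in-time
agent-1 jobs with no agent-1 job executed between them and exactly `ℓ` agent-2
jobs completing before `a` starts, then there is such a schedule in which the
maximal fitting consecutive subsequence `J^{(2)}_{ℓ+1}, …, J^{(2)}_{ℓ+K}` of
agent-2 jobs is executed back-to-back right after the completion of `a`, and no
job is executed between its end and the start of `b`. (Indices of `Fin k` are
0-based, so 1-indexed jobs `ℓ+1, …, ℓ+K` are those `j` with `ℓ ≤ j < ℓ + K`.) -/
theorem jit_consecutive_block_lemma
    (n k : ℕ) (p₁ d₁ : Fin n → ℕ) (p₂ w₂ : Fin k → ℕ)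
    (hp₁ : ∀ i, 0 < p₁ i) (hp₂ : ∀ j, 0 < p₂ j)
    (A₁ A₂ ℓ : ℕ) (hℓ : ℓ ≤ k) (a b : Fin n)
    (hab : d₁ a ≤ d₁ b - p₁ b)
    (K : ℕ) (hK1 : K ≤ k - ℓ)
    (hK2 : prefixSum k p₂ ℓ K ≤ d₁ b - p₁ b - d₁ a)
    (hK3 : ∀ t, t ≤ k - ℓ → prefixSum k p₂ ℓ t ≤ d₁ b - p₁ b - d₁ a → t ≤ K)
    (h : ∃ s : Fin n ⊕ Fin k → ℕ,
      Lemma10Hyp n k p₁ d₁ p₂ w₂ A₁ A₂ ℓ a b s) :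
    ∃ s : Fin n ⊕ Fin k → ℕ,
      Lemma10Hyp n k p₁ d₁ p₂ w₂ A₁ A₂ ℓ a b s ∧
      (∀ j : Fin k, ℓ ≤ (j : ℕ) → (j : ℕ) < ℓ + K →
        s (Sum.inr j) = d₁ a + prefixSum k p₂ ℓ ((j : ℕ) - ℓ)) ∧
      (∀ i : Fin n ⊕ Fin k,
        Disjoint (Set.Ioc (s i) (s i + Sum.elim p₁ p₂ i))
          (Set.Ioc (d₁ a + prefixSum k p₂ ℓ K) (d₁ b - p₁ b))) :=
  jit_consecutive_block_lemma_general n k p₁ d₁ p₂ w₂ hp₁ hp₂ A₁ A₂ ℓ a b hab K hK2 hK3 h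
end

section
/- Let m ≥ 1, let x : Fin m → ℕ satisfy x j ≥ 1 for all j, and let z : ℕ satisfy ∑ j, x j = 2·z. Consider 2m unit-processing-time jobs indexed by Fin m ⊕ Fin m, where for each j both inl j (agent 1) and inr j (agent 2) have due date j+1 and weight x j. Then there exists a bijection σ : Fin m ⊕ Fin m ≃ Fin (2m) (so that the job placed in position t completes at time t+1) such that ∑ over j with σ (inl j) = j of x j ≥ z and ∑ over j with σ (inr j) = j of x j ≥ z, if and only if there exists a subset S ⊆ Fin m with ∑_{j ∈ S} x j = z. -/
/-!
If both agents reach just-in-time weight `z`, their just-in-time index sets are disjoint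
(the two copies of `j` cannot both occupy position `j`), so together they weigh at most
`∑ x = 2z`; hence each weighs exactly `z`. Conversely, given `S` of weight `z`, put
`inl j` in position `j` and `inr j` in position `m + j` for `j ∈ S`, and the other way
round for `j ∉ S`: agent 1 is then just in time exactly on `S`, agent 2 exactly on `Sᶜ`.
-/

open Finset

section Weights

variable {ι : Type*} [Fintype ι]

theorem sum_eq_of_disjoint_of_le [DecidableEq ι] {A B : Finset ι} (hAB : Disjoint A B)
    {x : ι → ℕ} {z : ℕ}
    (hsum : ∑ j, x j = 2 * z) (hA : z ≤ ∑ j ∈ A, x j) (hB : z ≤ ∑ j ∈ B, x j) :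
    ∑ j ∈ A, x j = z := by
  have hle : ∑ j ∈ A, x j + ∑ j ∈ B, x j ≤ 2 * z := by
    rw [← sum_union hAB, ← hsum]
    exact sum_le_sum_of_subset (subset_univ _)
  omega

theorem disjoint_filter_inl_inr {β : Type*} [DecidableEq β] {f : ι ⊕ ι → β} (hf : f.Injective)
    (g : ι → β) :
    Disjoint (univ.filter fun j => f (.inl j) = g j) (univ.filter fun j => f (.inr j) = g j) := by
  refine disjoint_left.2 fun j hl hr => ?_
  rw [mem_filter] at hl hr
  exact Sum.inl_ne_inr (hf (hl.2.trans hr.2.symm))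

end Weights

section Schedule

variable {α : Type*} [DecidableEq α]

def swapOutside (S : Finset α) : Equiv.Perm (α ⊕ α) :=
  Function.Involutive.toPerm
    (Sum.elim (fun j => if j ∈ S then .inl j else .inr j)
      (fun j => if j ∈ S then .inr j else .inl j))
    (by rintro (j | j) <;> by_cases h : j ∈ S <;> simp [h])

theorem swapOutside_inl (S : Finset α) (j : α) :
    swapOutside S (.inl j) = if j ∈ S then .inl j else .inr j := rfl

theorem swapOutside_inr (S : Finset α) (j : α) :
    swapOutside S (.inr j) = if j ∈ S then .inr j else .inl j := rfl

variable {m : ℕ}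

def jitSchedule (S : Finset (Fin m)) : (Fin m ⊕ Fin m) ≃ Fin (2 * m) :=
  (swapOutside S).trans (finSumFinEquiv.trans (finCongr (two_mul m).symm))

theorem jitSchedule_inl_val (S : Finset (Fin m)) (j : Fin m) :
    (jitSchedule S (.inl j) : ℕ) = if j ∈ S then (j : ℕ) else m + j := by
  by_cases h : j ∈ S <;> simp [jitSchedule, swapOutside_inl, h, add_comm]

theorem jitSchedule_inr_val (S : Finset (Fin m)) (j : Fin m) :
    (jitSchedule S (.inr j) : ℕ) = if j ∈ S then m + j else (j : ℕ) := by
  by_cases h : j ∈ S <;> simp [jitSchedule, swapOutside_inr, h, add_comm]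

theorem filter_jitSchedule_inl (S : Finset (Fin m)) :
    univ.filter (fun j : Fin m => (jitSchedule S (.inl j) : ℕ) = j) = S := by
  ext j
  by_cases h : j ∈ S <;> simp [jitSchedule_inl_val, h, j.pos.ne']

theorem filter_jitSchedule_inr (S : Finset (Fin m)) :
    univ.filter (fun j : Fin m => (jitSchedule S (.inr j) : ℕ) = j) = Sᶜ := by
  ext j
  by_cases h : j ∈ S <;> simp [jitSchedule_inr_val, h, j.pos.ne']

end Schedule

theorem partition_reduction_jit_jit_general
    (m : ℕ) (x : Fin m → ℕ)
    (z : ℕ) (hsum : ∑ j, x j = 2 * z) :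
    (∃ σ : (Fin m ⊕ Fin m) ≃ Fin (2 * m),
      z ≤ (∑ j ∈ Finset.univ.filter
        (fun j : Fin m => (σ (Sum.inl j) : ℕ) = (j : ℕ)), x j) ∧
      z ≤ (∑ j ∈ Finset.univ.filter
        (fun j : Fin m => (σ (Sum.inr j) : ℕ) = (j : ℕ)), x j)) ↔
    (∃ S : Finset (Fin m), ∑ j ∈ S, x j = z) := by
  constructor
  · rintro ⟨σ, h₁, h₂⟩
    have hσ : Function.Injective fun s => (σ s : ℕ) := Fin.val_injective.comp σ.injective
    exact ⟨_, sum_eq_of_disjoint_of_le (disjoint_filter_inl_inr hσ Fin.val) hsum h₁ h₂⟩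
  · rintro ⟨S, hS⟩
    refine ⟨jitSchedule S, ?_, ?_⟩
    · rw [filter_jitSchedule_inl, hS]
    · have := sum_add_sum_compl S x
      rw [filter_jitSchedule_inr]
      omega

/-- Correctness of the Partition reduction in Theorem 13 for
`1 | p_j^{(1)} = p_j^{(2)} = 1, ∑ w_j^{(1)} E_j^{(1)} ≥ A₁, ∑ w_j^{(2)} E_j^{(2)} ≥ A₂ |`:
the `2m` unit-time jobs are indexed by `Fin m ⊕ Fin m`, both copies of index
`j` have due date `j + 1` and weight `x j`, a schedule is a bijection
`σ : Fin m ⊕ Fin m ≃ Fin (2m)` (the job in position `t` completes at time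
`t + 1`), and a job with index `j` is just-in-time iff its position equals
`j`. Such a schedule with each agent's just-in-time weight at least `z` exists
iff the `x j` admit a partition into two halves of sum `z`. -/
theorem partition_reduction_jit_jit
    (m : ℕ) (hm : 1 ≤ m) (x : Fin m → ℕ) (hx : ∀ j, 1 ≤ x j)
    (z : ℕ) (hsum : ∑ j, x j = 2 * z) :
    (∃ σ : (Fin m ⊕ Fin m) ≃ Fin (2 * m),
      z ≤ (∑ j ∈ Finset.univ.filter
        (fun j : Fin m => (σ (Sum.inl j) : ℕ) = (j : ℕ)), x j) ∧
      z ≤ (∑ j ∈ Finset.univ.filter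
        (fun j : Fin m => (σ (Sum.inr j) : ℕ) = (j : ℕ)), x j)) ↔
    (∃ S : Finset (Fin m), ∑ j ∈ S, x j = z) :=
  partition_reduction_jit_jit_general m x z hsum
end

section
/- Let the agent-1 jobs have positive processing times p₁ : Fin n → ℕ, due dates d₁ : Fin n → ℕ with p₁ j ≤ d₁ j for all j, and weights w₁ : Fin n → ℕ, and let the agent-2 jobs have positive processing times p₂ : Fin k → ℕ, due dates d₂ : Fin k → ℕ with p₂ j ≤ d₂ j for all j, and weights w₂ : Fin k → ℕ; let A₁, A₂ : ℕ. Then there exists a timed schedule of all n + k jobs with ∑ over just-in-time agent-1 jobs i of w₁ i ≥ A₁ and ∑ over just-in-time agent-2 jobs j of w₂ j ≥ A₂, if and only if there exist subsets S₁ ⊆ Fin n and S₂ ⊆ Fin k such that the family of time intervals consisting of (d₁ j − p₁ j, d₁ j] for j ∈ S₁ together with (d₂ j − p₂ j, d₂ j] for j ∈ S₂ is pairwise disjoint, ∑_{j ∈ S₁} w₁ j ≥ A₁, and ∑_{j ∈ S₂} w₂ j ≥ A₂. -/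
def jitInterval {ι : Type*} (p d : ι → ℕ) (i : ι) : Set ℕ :=
  Set.Ioc (d i - p i) (d i)

theorem jitInterval_sumElim {α β : Type*} (p₁ d₁ : α → ℕ) (p₂ d₂ : β → ℕ) :
    Sum.elim (jitInterval p₁ d₁) (jitInterval p₂ d₂) =
      jitInterval (Sum.elim p₁ p₂) (Sum.elim d₁ d₂) := by
  ext (i | j) <;> rfl

theorem jitInterval_eq_of_jit {ι : Type*} {p d s : ι → ℕ} {i : ι} (h : s i + p i = d i) :
    jitInterval p d i = Set.Ioc (s i) (s i + p i) := by
  rw [jitInterval, ← h, Nat.add_sub_cancel]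

theorem IsTimedSchedule.pairwiseDisjoint_jitInterval {ι : Type*} {p d s : ι → ℕ}
    (hs : IsTimedSchedule p s) {S : Set ι} (hS : ∀ i ∈ S, s i + p i = d i) :
    S.PairwiseDisjoint (jitInterval p d) := by
  intro i hi j hj hij
  rw [Function.onFun, jitInterval_eq_of_jit (hS i hi), jitInterval_eq_of_jit (hS j hj)]
  exact hs i j hij

theorem disjoint_Ioc_mul_of_ne (T : ℕ) {a b : ℕ} (hab : a ≠ b) :
    Disjoint (Set.Ioc (T * a) (T * (a + 1))) (Set.Ioc (T * b) (T * (b + 1))) := by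
  rcases hab.lt_or_gt with h | h
  · exact Set.Ioc_disjoint_Ioc_of_le (Nat.mul_le_mul_left T h)
  · exact (Set.Ioc_disjoint_Ioc_of_le (Nat.mul_le_mul_left T h)).symm

/-- With `T` a bound on all due dates, the jobs of `S` run just in time inside `(0, T]`, and
every other job gets a block `(T (m + 1), T (m + 2)]` of its own, `m` being its index in an
enumeration. -/
theorem exists_isTimedSchedule_jit_on {ι : Type*} [Finite ι] {p d : ι → ℕ}
    (hpd : ∀ i, p i ≤ d i) {S : Set ι} (hS : S.PairwiseDisjoint (jitInterval p d)) :
    ∃ s, IsTimedSchedule p s ∧ ∀ i ∈ S, s i + p i = d i := by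
  classical
  obtain ⟨T, hdT⟩ := Finite.exists_le d
  obtain ⟨idx, hidx⟩ := Countable.exists_injective_nat ι
  let block i := if i ∈ S then 0 else idx i + 1
  let s i := if i ∈ S then d i - p i else T * block i
  have hjit : ∀ i ∈ S, s i + p i = d i := fun i hi => by
    simp only [s, if_pos hi, Nat.sub_add_cancel (hpd i)]
  have hblock : ∀ i, Set.Ioc (s i) (s i + p i) ⊆ Set.Ioc (T * block i) (T * (block i + 1)) := by
    intro i
    by_cases hi : i ∈ S
    · rw [← jitInterval_eq_of_jit (hjit i hi)]
      simp only [block, if_pos hi]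
      exact Set.Ioc_subset_Ioc (Nat.zero_le _) (by simpa using hdT i)
    · simp only [s, block, if_neg hi]
      exact Set.Ioc_subset_Ioc le_rfl (by nlinarith [hpd i, hdT i])
  refine ⟨s, fun i j hij => ?_, hjit⟩
  by_cases hboth : i ∈ S ∧ j ∈ S
  · rw [← jitInterval_eq_of_jit (hjit i hboth.1), ← jitInterval_eq_of_jit (hjit j hboth.2)]
    exact hS hboth.1 hboth.2 hij
  · have hne : block i ≠ block j := by
      simp only [block]
      split_ifs with hi hj hj
      · exact absurd ⟨hi, hj⟩ hboth
      · omega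
      · omega
      · simpa using hidx.ne hij
    exact (disjoint_Ioc_mul_of_ne T hne).mono (hblock i) (hblock j)

theorem jit_jit_interval_characterization_general
    (n k : ℕ) (p₁ d₁ w₁ : Fin n → ℕ) (p₂ d₂ w₂ : Fin k → ℕ)
    (hd₁ : ∀ i, p₁ i ≤ d₁ i) (hd₂ : ∀ j, p₂ j ≤ d₂ j) (A₁ A₂ : ℕ) :
    (∃ s : Fin n ⊕ Fin k → ℕ, IsTimedSchedule (Sum.elim p₁ p₂) s ∧
      A₁ ≤ (∑ i ∈ Finset.univ.filter
        (fun i : Fin n => s (Sum.inl i) + p₁ i = d₁ i), w₁ i) ∧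
      A₂ ≤ (∑ j ∈ Finset.univ.filter
        (fun j : Fin k => s (Sum.inr j) + p₂ j = d₂ j), w₂ j)) ↔
    (∃ (S₁ : Finset (Fin n)) (S₂ : Finset (Fin k)),
      ((↑(S₁.image Sum.inl ∪ S₂.image Sum.inr) : Set (Fin n ⊕ Fin k)).PairwiseDisjoint
        (Sum.elim (fun i => Set.Ioc (d₁ i - p₁ i) (d₁ i))
          (fun j => Set.Ioc (d₂ j - p₂ j) (d₂ j)))) ∧
      A₁ ≤ (∑ j ∈ S₁, w₁ j) ∧ A₂ ≤ (∑ j ∈ S₂, w₂ j)) := by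
  change _ ↔ ∃ S₁ S₂, Set.PairwiseDisjoint _ (Sum.elim (jitInterval p₁ d₁) (jitInterval p₂ d₂)) ∧ _
  rw [jitInterval_sumElim]
  constructor
  · rintro ⟨s, hs, h₁, h₂⟩
    refine ⟨_, _, hs.pairwiseDisjoint_jitInterval ?_, h₁, h₂⟩
    rintro (i | j) h <;> simpa using h
  · rintro ⟨S₁, S₂, hdisj, h₁, h₂⟩
    have hpd : ∀ x, Sum.elim p₁ p₂ x ≤ Sum.elim d₁ d₂ x := by
      rintro (i | j)
      exacts [hd₁ i, hd₂ j]
    obtain ⟨s, hs, hjit⟩ := exists_isTimedSchedule_jit_on hpd hdisj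
    refine ⟨s, hs, h₁.trans (Finset.sum_le_sum_of_subset fun i hi => ?_),
      h₂.trans (Finset.sum_le_sum_of_subset fun j hj => ?_)⟩
    · simpa using hjit (Sum.inl i) (by simpa using hi)
    · simpa using hjit (Sum.inr j) (by simpa using hj)

/-- Feasibility of the two-agent just-in-time problem
`1 | ∑ w_j^{(1)} E_j^{(1)} ≥ A₁, ∑ w_j^{(2)} E_j^{(2)} ≥ A₂ |` is equivalent to
the existence of two sets `S₁`, `S₂` of jobs whose time intervals
`(d j - p j, d j]` are pairwise disjoint and whose weights meet the bounds of
the respective agents (Theorem 14). -/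
theorem jit_jit_interval_characterization
    (n k : ℕ) (p₁ d₁ w₁ : Fin n → ℕ) (p₂ d₂ w₂ : Fin k → ℕ)
    (hp₁ : ∀ i, 0 < p₁ i) (hp₂ : ∀ j, 0 < p₂ j)
    (hd₁ : ∀ i, p₁ i ≤ d₁ i) (hd₂ : ∀ j, p₂ j ≤ d₂ j) (A₁ A₂ : ℕ) :
    (∃ s : Fin n ⊕ Fin k → ℕ, IsTimedSchedule (Sum.elim p₁ p₂) s ∧
      A₁ ≤ (∑ i ∈ Finset.univ.filter
        (fun i : Fin n => s (Sum.inl i) + p₁ i = d₁ i), w₁ i) ∧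
      A₂ ≤ (∑ j ∈ Finset.univ.filter
        (fun j : Fin k => s (Sum.inr j) + p₂ j = d₂ j), w₂ j)) ↔
    (∃ (S₁ : Finset (Fin n)) (S₂ : Finset (Fin k)),
      ((↑(S₁.image Sum.inl ∪ S₂.image Sum.inr) : Set (Fin n ⊕ Fin k)).PairwiseDisjoint
        (Sum.elim (fun i => Set.Ioc (d₁ i - p₁ i) (d₁ i))
          (fun j => Set.Ioc (d₂ j - p₂ j) (d₂ j)))) ∧
      A₁ ≤ (∑ j ∈ S₁, w₁ j) ∧ A₂ ≤ (∑ j ∈ S₂, w₂ j)) :=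
  jit_jit_interval_characterization_general n k p₁ d₁ w₁ p₂ d₂ w₂ hd₁ hd₂ A₁ A₂
end
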